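/- arXiv:2508.21534 — 5 statements merged into one kernel-verified Lean document; each statement's English description precedes it below -/
import Mathlib

section
/- Let p, n ≥ 1, let S = (S_0, …, S_{2n}) be a truncated matrix moment sequence whose moment matrix M(n) is positive definite, let t ∈ ℝ and m ∈ ℕ ∪ {0}. If there exists a minimal representing measure for S (pairwise distinct x_1,…,x_ℓ ∈ ℝ and nonzero PSD symmetric p×p matrices A_1,…,A_ℓ with S_i = Σ_j x_j^i A_j for 0 ≤ i ≤ 2n and Σ_j rank A_j = (n+1)p) whose multiplicity at t equals m, then m ≤ rank H_{x−t}(n−1) − (n−1)p, where H_{x−t}(n−1) is the (x−t)-localizing moment matrix of S. -/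
/-!
Let `V` be the block Vandermonde matrix of the atoms and `D` the block diagonal matrix with
blocks `(x_j - t) A_j`. Then `H_{x-t}(n-1) = V D Vᵀ`, and `M(n)` is the analogous product with
blocks `A_j` and one more block row in `V`. The map `D Vᵀ` is injective: if
`(x_j - t) A_j v(x_j) = 0` for all `j`, the vector polynomial `w = (X - t) v` of degree `≤ n`
satisfies `wᵀ M(n) w = Σ_j w(x_j)ᵀ A_j w(x_j) = 0`, so `w = 0` and `v = 0`. Hence
`rank (V D) = rank (D Vᵀ) = np`, while `rank D ≤ Σ_{x_j ≠ t} rank A_j = (n+1)p - m` by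
minimality, and Frobenius' inequality `rank (V D) + rank (D Vᵀ) ≤ rank D + rank (V D Vᵀ)`
gives `2np ≤ (n+1)p - m + rank H_{x-t}(n-1)`.
-/

open Matrix

/-- The `n`-th truncated moment matrix of a sequence of `p × p` real matrices:
the `(i,j)`-th `p × p` block is `S (i + j)` for `0 ≤ i, j ≤ n`. -/
def momentMatrix (p n : ℕ) (S : ℕ → Matrix (Fin p) (Fin p) ℝ) :
    Matrix (Fin (n + 1) × Fin p) (Fin (n + 1) × Fin p) ℝ :=
  fun i j => S (i.1.1 + j.1.1) i.2 j.2

/-- The `(x - t)`-localizing moment matrix `H_{x-t}(n-1)` of size `np`: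
the `(i,j)`-th `p × p` block is `S (i + j + 1) - t • S (i + j)` for `0 ≤ i, j ≤ n - 1`. -/
def locMatrix (p n : ℕ) (t : ℝ) (S : ℕ → Matrix (Fin p) (Fin p) ℝ) :
    Matrix (Fin n × Fin p) (Fin n × Fin p) ℝ :=
  fun i j => S (i.1.1 + j.1.1 + 1) i.2 j.2 - t * S (i.1.1 + j.1.1) i.2 j.2

/-- A minimal representing measure for the truncated matrix moment sequence
`S_0, …, S_{2n}`: pairwise distinct atoms `x j`, nonzero PSD masses `A j` with
`S i = ∑ j (x j)^i • A j` for `i ≤ 2n` and total rank `(n+1)p`. -/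
def IsMinimalRepMeasure (p n ℓ : ℕ) (S : ℕ → Matrix (Fin p) (Fin p) ℝ)
    (x : Fin ℓ → ℝ) (A : Fin ℓ → Matrix (Fin p) (Fin p) ℝ) : Prop :=
  Function.Injective x ∧
    (∀ j, A j ≠ 0 ∧ (A j).PosSemidef) ∧
    (∀ i ≤ 2 * n, S i = ∑ j, x j ^ i • A j) ∧
    (∑ j, (A j).rank) = (n + 1) * p

/-- The multiplicity of `t` in the measure given by atoms `x` and masses `A` equals `m`. -/
def MultiplicityEq {p : ℕ} (ℓ : ℕ) (x : Fin ℓ → ℝ)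
    (A : Fin ℓ → Matrix (Fin p) (Fin p) ℝ) (t : ℝ) (m : ℕ) : Prop :=
  (∃ j, x j = t ∧ (A j).rank = m) ∨ ((∀ j, x j ≠ t) ∧ m = 0)

open Module Polynomial

theorem Submodule.finrank_map_add_finrank_inf_ker {K V V' : Type*} [DivisionRing K]
    [AddCommGroup V] [Module K V] [FiniteDimensional K V] [AddCommGroup V'] [Module K V']
    (f : V →ₗ[K] V') (X : Submodule K V) :
    finrank K (X.map f) + finrank K ↥(X ⊓ LinearMap.ker f) = finrank K X := by
  have h := (f.domRestrict X).finrank_range_add_finrank_ker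
  rwa [LinearMap.range_domRestrict, LinearMap.ker_domRestrict,
    (Submodule.equivMapOfInjective X.subtype X.injective_subtype _).finrank_eq,
    Submodule.map_comap_subtype] at h

theorem Submodule.finrank_add_finrank_map_le_of_le {K V V' : Type*} [DivisionRing K]
    [AddCommGroup V] [Module K V] [FiniteDimensional K V] [AddCommGroup V'] [Module K V']
    (f : V →ₗ[K] V') {U W : Submodule K V} (h : U ≤ W) :
    finrank K U + finrank K (W.map f) ≤ finrank K W + finrank K (U.map f) := by
  have hU := U.finrank_map_add_finrank_inf_ker f
  have hW := W.finrank_map_add_finrank_inf_ker f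
  have := Submodule.finrank_mono (inf_le_inf_right (LinearMap.ker f) h)
  omega

namespace Matrix

variable {K l m n o : Type*} [Field K]

theorem rank_mul_add_rank_mul_le [Fintype m] [Fintype n] [Fintype o]
    (A : Matrix l m K) (B : Matrix m n K) (C : Matrix n o K) :
    (A * B).rank + (B * C).rank ≤ B.rank + (A * B * C).rank := by
  have h := Submodule.finrank_add_finrank_map_le_of_le A.mulVecLin
    (LinearMap.range_comp_le_range C.mulVecLin B.mulVecLin)
  rw [← LinearMap.range_comp, ← LinearMap.range_comp, ← LinearMap.comp_assoc,
    ← mulVecLin_mul, ← mulVecLin_mul, ← mulVecLin_mul] at h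
  unfold rank
  omega

theorem rank_add_le [Fintype n] (A B : Matrix m n K) : (A + B).rank ≤ A.rank + B.rank := by
  unfold rank
  rw [mulVecLin_add]
  exact (Submodule.finrank_mono (LinearMap.range_add_le _ _)).trans
    (Submodule.finrank_add_le_finrank_add_finrank _ _)

theorem rank_sum_le [Fintype n] {ι : Type*} (s : Finset ι) (A : ι → Matrix m n K) :
    (∑ i ∈ s, A i).rank ≤ ∑ i ∈ s, (A i).rank :=
  Finset.le_sum_of_subadditive (fun A : Matrix m n K => A.rank) rank_zero.le rank_add_le s A

theorem rank_smul_le [Fintype m] [DecidableEq m] [Fintype n] (c : K) (A : Matrix m n K) :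
    (c • A).rank ≤ A.rank := by
  rw [smul_eq_diagonal_mul]
  exact rank_mul_le_right _ _

theorem rank_eq_card_of_mulVec_eq_zero [Fintype n] {A : Matrix m n K}
    (h : ∀ v, A *ᵥ v = 0 → v = 0) : A.rank = Fintype.card n := by
  rw [rank, LinearMap.finrank_range_of_inj ((injective_iff_map_eq_zero A.mulVecLin).2 h),
    finrank_fintype_fun_eq_card]

theorem rank_blockDiagonal_single_le [Fintype m] [Fintype n] [Fintype o] [DecidableEq o]
    (i : o) (B : Matrix m n K) : (blockDiagonal (Pi.single i B)).rank ≤ B.rank := by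
  classical
  have hfactor : blockDiagonal (Pi.single i B) =
      of (fun (u : m × o) (r : m) => if u.2 = i ∧ u.1 = r then (1 : K) else 0) * B *
        of (fun (c : n) (v : n × o) => if v.2 = i ∧ v.1 = c then (1 : K) else 0) := by
    ext ⟨r, k⟩ ⟨c, l⟩
    rcases eq_or_ne k i with rfl | hk
    · simp [blockDiagonal_apply, Matrix.mul_apply, ite_and, eq_comm]
    · simp [blockDiagonal_apply, Matrix.mul_apply, ite_and, hk]
  rw [hfactor]
  exact (rank_mul_le_left _ _).trans (rank_mul_le_right _ _)

theorem rank_blockDiagonal_le [Fintype m] [Fintype n] [Fintype o] [DecidableEq o]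
    (M : o → Matrix m n K) : (blockDiagonal M).rank ≤ ∑ i, (M i).rank := by
  conv_lhs => rw [← Finset.univ_sum_single M, ← blockDiagonalAddMonoidHom_apply, map_sum]
  exact (rank_sum_le _ _).trans (Finset.sum_le_sum fun i _ => rank_blockDiagonal_single_le i _)

theorem blockDiagonal_mul_diagonal {R ι : Type*} [CommRing R] [Fintype ι] [DecidableEq ι]
    [Fintype m] [DecidableEq m] (B : ι → Matrix m m R) (d : ι → R) :
    blockDiagonal B * diagonal (fun u : m × ι => d u.2) = blockDiagonal fun i => d i • B i := by
  ext ⟨r, i⟩ ⟨c, j⟩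
  by_cases h : i = j <;> simp [blockDiagonal_apply, h, mul_comm]

end Matrix

section VectorPolynomial

/- A vector `v : Fin N × Fin p → R` stands for the polynomial `∑ a, v (a, ·) X ^ a` with
coefficients in `Fin p → R`, of degree `< N`. -/

variable {R ι : Type*} [CommRing R] {p N : ℕ}

noncomputable def blockVandermonde (p N : ℕ) (x : ι → R) :
    Matrix (Fin N × Fin p) (Fin p × ι) R :=
  of fun u v => if u.2 = v.1 then x v.2 ^ (u.1 : ℕ) else 0

theorem blockVandermonde_mul_blockDiagonal_mul_transpose [Fintype ι] [DecidableEq ι]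
    (x : ι → R) (B : ι → Matrix (Fin p) (Fin p) R) :
    blockVandermonde p N x * blockDiagonal B * (blockVandermonde p N x)ᵀ =
      of fun u v => ∑ i, x i ^ ((u.1 : ℕ) + v.1) * B i u.2 v.2 := by
  ext u v
  simp [blockVandermonde, Matrix.mul_apply, blockDiagonal_apply, Fintype.sum_prod_type,
    pow_add, ite_mul, mul_right_comm]

noncomputable def blockPoly (v : Fin N × Fin p → R) (c : Fin p) : R[X] :=
  ∑ a : Fin N, C (v (a, c)) * X ^ (a : ℕ)

theorem coeff_blockPoly (v : Fin N × Fin p → R) (a : Fin N) (c : Fin p) :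
    (blockPoly v c).coeff a = v (a, c) := by
  simp [blockPoly, finsetSum_coeff, Fin.val_inj]

theorem degree_blockPoly_lt (v : Fin N × Fin p → R) (c : Fin p) :
    (blockPoly v c).degree < N :=
  degree_sum_fin_lt _

theorem transpose_blockVandermonde_mulVec [Fintype ι] (x : ι → R) (v : Fin N × Fin p → R) :
    (blockVandermonde p N x)ᵀ *ᵥ v = fun u => (blockPoly v u.1).eval (x u.2) := by
  ext ⟨c, i⟩
  simp [blockVandermonde, blockPoly, mulVec, dotProduct, eval_finsetSum, Fintype.sum_prod_type,
    mul_comm (x i ^ _)]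

noncomputable def mulXSubC (t : R) (v : Fin N × Fin p → R) : Fin (N + 1) × Fin p → R :=
  fun u => ((X - C t) * blockPoly v u.2).coeff u.1

theorem blockPoly_mulXSubC [Nontrivial R] (t : R) (v : Fin N × Fin p → R) (c : Fin p) :
    blockPoly (mulXSubC t v) c = (X - C t) * blockPoly v c := by
  have hdeg : ((X - C t) * blockPoly v c).degree < ↑(N + 1) := by
    refine (degree_mul_le _ _).trans_lt ?_
    rw [degree_X_sub_C, Nat.cast_add, Nat.cast_one, add_comm (N : WithBot ℕ)]
    exact WithBot.add_lt_add_left WithBot.one_ne_bot (degree_blockPoly_lt v c)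
  rw [blockPoly, ← sum_C_mul_X_pow_eq ((X - C t) * blockPoly v c),
    ← sum_fin (fun n a => C a * X ^ n) (by simp) hdeg]
  rfl

theorem eq_zero_of_mulXSubC_eq_zero [IsDomain R] {t : R} {v : Fin N × Fin p → R}
    (h : mulXSubC t v = 0) : v = 0 := by
  ext ⟨a, c⟩
  have hc := blockPoly_mulXSubC t v c
  have h0 : blockPoly (0 : Fin (N + 1) × Fin p → R) c = 0 := by simp [blockPoly]
  rw [h, h0, eq_comm, mul_eq_zero, or_iff_right (X_sub_C_ne_zero t)] at hc
  rw [Pi.zero_apply, ← coeff_blockPoly v a c, hc, coeff_zero]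

theorem transpose_blockVandermonde_mulVec_mulXSubC [Fintype ι] [DecidableEq ι] [Nontrivial R]
    (x : ι → R) (t : R) (v : Fin N × Fin p → R) :
    (blockVandermonde p (N + 1) x)ᵀ *ᵥ mulXSubC t v =
      diagonal (fun u => x u.2 - t) *ᵥ ((blockVandermonde p N x)ᵀ *ᵥ v) := by
  ext u
  simp [transpose_blockVandermonde_mulVec, blockPoly_mulXSubC, mulVec_diagonal]

end VectorPolynomial

section MomentRepresentation

variable {ι : Type*} [Fintype ι] [DecidableEq ι] {p n : ℕ}
  {S : ℕ → Matrix (Fin p) (Fin p) ℝ} {x : ι → ℝ} {A : ι → Matrix (Fin p) (Fin p) ℝ}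

theorem momentMatrix_eq_blockVandermonde (hS : ∀ i ≤ 2 * n, S i = ∑ j, x j ^ i • A j) :
    momentMatrix p n S =
      blockVandermonde p (n + 1) x * blockDiagonal A * (blockVandermonde p (n + 1) x)ᵀ := by
  rw [blockVandermonde_mul_blockDiagonal_mul_transpose]
  ext u v
  rw [momentMatrix, hS _ (by omega)]
  simp [Matrix.sum_apply]

theorem locMatrix_eq_blockVandermonde (hS : ∀ i ≤ 2 * n, S i = ∑ j, x j ^ i • A j) (t : ℝ) :
    locMatrix p n t S = blockVandermonde p n x * blockDiagonal (fun j => (x j - t) • A j) *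
      (blockVandermonde p n x)ᵀ := by
  rw [blockVandermonde_mul_blockDiagonal_mul_transpose]
  ext u v
  rw [locMatrix, hS _ (by omega), hS _ (by omega)]
  simp only [Matrix.sum_apply, Matrix.smul_apply, smul_eq_mul, Finset.mul_sum,
    ← Finset.sum_sub_distrib, of_apply]
  exact Finset.sum_congr rfl fun j _ => by ring

theorem rank_blockDiagonal_mul_transpose_blockVandermonde
    (hM : (momentMatrix p n S).PosDef) (hS : ∀ i ≤ 2 * n, S i = ∑ j, x j ^ i • A j) (t : ℝ) :
    ((blockDiagonal fun j => (x j - t) • A j) * (blockVandermonde p n x)ᵀ).rank = n * p := by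
  rw [rank_eq_card_of_mulVec_eq_zero fun v hv => ?_, Fintype.card_prod, Fintype.card_fin,
    Fintype.card_fin]
  rw [← mulVec_mulVec] at hv
  apply eq_zero_of_mulXSubC_eq_zero (t := t)
  by_contra hw
  have hquad : mulXSubC t v ⬝ᵥ momentMatrix p n S *ᵥ mulXSubC t v = 0 := by
    rw [momentMatrix_eq_blockVandermonde hS, ← mulVec_mulVec, ← mulVec_mulVec,
      dotProduct_mulVec, ← mulVec_transpose, transpose_blockVandermonde_mulVec_mulXSubC,
      mulVec_mulVec ((blockVandermonde p n x)ᵀ *ᵥ v) (blockDiagonal A),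
      blockDiagonal_mul_diagonal A (fun j => x j - t), hv, dotProduct_zero]
  simpa [hquad] using hM.dotProduct_mulVec_pos hw

end MomentRepresentation

theorem rank_blockDiagonal_sub_smul_add_le {p ℓ m : ℕ} {x : Fin ℓ → ℝ}
    {A : Fin ℓ → Matrix (Fin p) (Fin p) ℝ} {t : ℝ} (hmult : MultiplicityEq ℓ x A t m) :
    (blockDiagonal fun j => (x j - t) • A j).rank + m ≤ ∑ j, (A j).rank := by
  refine (Nat.add_le_add_right (rank_blockDiagonal_le _) m).trans ?_
  have hsmul : ∀ s : Finset (Fin ℓ), ∑ j ∈ s, ((x j - t) • A j).rank ≤ ∑ j ∈ s, (A j).rank :=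
    fun s => Finset.sum_le_sum fun j _ => rank_smul_le _ _
  rcases hmult with ⟨j₀, hxj₀, rfl⟩ | ⟨-, rfl⟩
  · rw [← Finset.add_sum_erase _ _ (Finset.mem_univ j₀),
      ← Finset.add_sum_erase _ _ (Finset.mem_univ j₀), hxj₀, sub_self, zero_smul, rank_zero]
    have := hsmul (Finset.univ.erase j₀)
    omega
  · exact hsmul Finset.univ

theorem gaussian_quadrature_prescribed_atom_necessity_general (p n : ℕ) (hn : 1 ≤ n)
    (S : ℕ → Matrix (Fin p) (Fin p) ℝ)
    (hM : (momentMatrix p n S).PosDef)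
    (t : ℝ) (m : ℕ)
    (hex : ∃ (ℓ : ℕ) (x : Fin ℓ → ℝ) (A : Fin ℓ → Matrix (Fin p) (Fin p) ℝ),
        IsMinimalRepMeasure p n ℓ S x A ∧ MultiplicityEq ℓ x A t m) :
    m + (n - 1) * p ≤ (locMatrix p n t S).rank := by
  obtain ⟨ℓ, x, A, ⟨-, hA, hS, htotal⟩, hmult⟩ := hex
  set V := blockVandermonde p n x
  set D := blockDiagonal fun j => (x j - t) • A j
  have hDsymm : Dᵀ = D := by
    rw [blockDiagonal_transpose]
    congr 1
    funext j
    exact ((isHermitian_iff_isSymm.1 (hA j).2.isHermitian).smul _).eq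
  have hDV : (D * Vᵀ).rank = n * p :=
    rank_blockDiagonal_mul_transpose_blockVandermonde hM hS t
  have hVD : (V * D).rank = n * p := by rw [← rank_transpose, transpose_mul, hDsymm, hDV]
  have hD := htotal ▸ rank_blockDiagonal_sub_smul_add_le hmult
  have hfrob := rank_mul_add_rank_mul_le V D Vᵀ
  rw [← locMatrix_eq_blockVandermonde hS, hVD, hDV] at hfrob
  obtain ⟨k, rfl⟩ := Nat.exists_eq_add_of_le' hn
  rw [Nat.add_sub_cancel]
  linarith

/-- If there is a minimal representing measure with multiplicity `m` at `t`,
then `m ≤ rank H_{x-t}(n-1) - (n-1)p`. -/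
theorem gaussian_quadrature_prescribed_atom_necessity (p n : ℕ) (hp : 1 ≤ p) (hn : 1 ≤ n)
    (S : ℕ → Matrix (Fin p) (Fin p) ℝ)
    (hSsym : ∀ i ≤ 2 * n, (S i).IsSymm)
    (hM : (momentMatrix p n S).PosDef)
    (t : ℝ) (m : ℕ)
    (hex : ∃ (ℓ : ℕ) (x : Fin ℓ → ℝ) (A : Fin ℓ → Matrix (Fin p) (Fin p) ℝ),
        IsMinimalRepMeasure p n ℓ S x A ∧ MultiplicityEq ℓ x A t m) :
    m + (n - 1) * p ≤ (locMatrix p n t S).rank :=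
  gaussian_quadrature_prescribed_atom_necessity_general p n hn S hM t m hex
end

section
/- Let p, n ≥ 1, let S = (S_0, …, S_{2n}) be a truncated matrix moment sequence whose moment matrix M(n) is positive definite, let t ∈ ℝ and m ∈ ℕ ∪ {0}. If m ≤ rank H_{x−t}(n−1) − (n−1)p, where H_{x−t}(n−1) is the (x−t)-localizing moment matrix of S, then there exists a minimal representing measure for S (pairwise distinct x_1,…,x_ℓ ∈ ℝ and nonzero PSD symmetric p×p matrices A_1,…,A_ℓ with S_i = Σ_j x_j^i A_j for 0 ≤ i ≤ 2n and Σ_j rank A_j = (n+1)p) whose multiplicity at t equals m. -/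
/-!
Write `M(n) = Cᵀ C` and let `J`, `X` be the matrices of the inclusion of polynomials of degree
`< n` into those of degree `≤ n` and of multiplication by `x`, so that
`H_{x-t}(n-1) = (C J)ᵀ (C (X - t J))`. The rank hypothesis is exactly the dimension count that
produces a symmetric `T` with `T (C J) = C (X - t J)` and `dim ker T = m`: force an
`m`-dimensional subspace of `ker (C (X - t J))ᵀ` meeting `range (C J)` trivially into the kernel,
and remove any further kernel by rank-one corrections vanishing on `range (C J)`. Diagonalizing
`T + t = U diag(ξ) Uᵀ`, the relation `(T + t) C J = C X` says that the columns of `Cᵀ U` are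
moment vectors `(ξₖⁱ wₖ)ᵢ`, and `Cᵀ U (Cᵀ U)ᵀ = M(n)`; grouping equal eigenvalues gives a minimal
representing measure whose mass at `t` has rank the multiplicity of the eigenvalue `t` of `T + t`,
that is `dim ker T = m`.
-/

open Matrix

open Module

theorem Matrix.rank_add_finrank_ker {K m n : Type*} [Field K] [Fintype n] (A : Matrix m n K) :
    A.rank + finrank K (LinearMap.ker A.mulVecLin) = Fintype.card n := by
  rw [Matrix.rank, LinearMap.finrank_range_add_finrank_ker, Module.finrank_fintype_fun_eq_card]

section SymmetricSolutions

variable {ι κ : Type*} [Fintype ι] [Fintype κ]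

theorem Matrix.mulVec_injective_mul {R l : Type*} [CommSemiring R] {A : Matrix l ι R}
    {B : Matrix ι κ R} (hA : Function.Injective A.mulVec) (hB : Function.Injective B.mulVec) :
    Function.Injective (A * B).mulVec :=
  fun v w h => hB (hA (by simpa only [mulVec_mulVec] using h))

variable [DecidableEq κ]

theorem exists_mul_eq_one_of_injective {F : Matrix ι κ ℝ} (hF : Function.Injective F.mulVec) :
    ∃ E : Matrix κ ι ℝ, E * F = 1 := by
  have hgram : IsUnit (Fᵀ * F) := by
    simpa [conjTranspose_eq_transpose_of_trivial] using
      (PosDef.conjTranspose_mul_self F hF).isUnit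
  refine ⟨(Fᵀ * F)⁻¹ * Fᵀ, ?_⟩
  rw [Matrix.mul_assoc, nonsing_inv_mul _ ((isUnit_iff_isUnit_det _).mp hgram)]

theorem exists_isSymm_mul_eq_of_mul_eq_one {R : Type*} [CommRing R] {E : Matrix κ ι R}
    {F G : Matrix ι κ R} (hEF : E * F = 1) (hFG : (Fᵀ * G).IsSymm) :
    ∃ T : Matrix ι ι R, T.IsSymm ∧ T * F = G := by
  -- `L = G E` already solves `L F = G`; the correction `Lᵀ (1 - F E)` vanishes on `range F`
  -- and makes it symmetric.
  set L := G * E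
  have hGF : Gᵀ * F = Fᵀ * G := by simpa only [transpose_mul, transpose_transpose] using hFG.eq
  have hL : Lᵀ * (F * E) = (F * E)ᵀ * L := by
    simp only [L, transpose_mul, Matrix.mul_assoc]
    rw [← Matrix.mul_assoc Gᵀ, hGF, Matrix.mul_assoc]
  refine ⟨L + Lᵀ - Lᵀ * (F * E), ?_, ?_⟩
  · rw [IsSymm, transpose_sub, transpose_add, transpose_transpose, transpose_mul Lᵀ,
      transpose_transpose, ← hL]
    abel
  · simp only [L, Matrix.sub_mul, Matrix.add_mul, Matrix.mul_assoc, hEF, Matrix.mul_one]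
    abel

theorem exists_vecMul_eq_zero_dotProduct_ne_zero {K : Type*} [Field K] [DecidableEq ι]
    {F : Matrix ι κ K} {u : ι → K} (hu : u ∉ LinearMap.range F.mulVecLin) :
    ∃ b : ι → K, b ᵥ* F = 0 ∧ b ⬝ᵥ u ≠ 0 := by
  obtain ⟨f, hfu, hf⟩ := Submodule.exists_dual_map_eq_bot_of_notMem hu inferInstance
  set b := (dotProductEquiv K ι).symm f
  have hb (x : ι → K) : b ⬝ᵥ x = f x := by
    rw [← dotProductEquiv_apply_apply, LinearEquiv.apply_symm_apply]
  refine ⟨b, funext fun j => ?_, by rwa [hb]⟩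
  have hFj := hf ▸ Submodule.mem_map_of_mem (f := f)
    (LinearMap.mem_range_self F.mulVecLin (Pi.single j 1))
  rw [Pi.zero_apply, ← mul_one ((b ᵥ* F) j), ← dotProduct_single, ← dotProduct_mulVec, hb]
  exact (Submodule.mem_bot K).mp hFj

theorem ker_add_vecMulVec_self_lt {K : Type*} [Field K] {T : Matrix ι ι K} (hT : T.IsSymm)
    {u b : ι → K} (hu : T *ᵥ u = 0) (hbu : b ⬝ᵥ u ≠ 0) :
    LinearMap.ker (T + vecMulVec b b).mulVecLin < LinearMap.ker T.mulVecLin := by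
  refine SetLike.lt_iff_le_and_exists.mpr ⟨fun x hx => ?_, u, hu, fun hu' => ?_⟩
  · have hx : T *ᵥ x + (b ⬝ᵥ x) • b = 0 := by
      simpa [add_mulVec, vecMulVec_mulVec] using hx
    -- pairing with `u ∈ ker T` kills `T x`
    have hbx : b ⬝ᵥ x = 0 := by
      have := congrArg (u ⬝ᵥ ·) hx
      simp only [dotProduct_add, dotProduct_smul, dotProduct_zero, smul_eq_mul] at this
      rw [dotProduct_mulVec, ← mulVec_transpose, hT.eq, hu, zero_dotProduct, zero_add] at this
      exact (mul_eq_zero.mp this).resolve_right (by rwa [dotProduct_comm])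
    simpa [hbx] using hx
  · have : (b ⬝ᵥ u) • b = 0 := by simpa [add_mulVec, vecMulVec_mulVec, hu] using hu'
    exact hbu (by simp [(smul_eq_zero.mp this).resolve_left hbu])

theorem exists_isSymm_mul_eq_ker_le_range {F G : Matrix ι κ ℝ}
    (hF : Function.Injective F.mulVec) (hFG : (Fᵀ * G).IsSymm) :
    ∃ T : Matrix ι ι ℝ, T.IsSymm ∧ T * F = G ∧
      LinearMap.ker T.mulVecLin ≤ LinearMap.range F.mulVecLin := by
  classical
  have hex : ∃ d, ∃ T : Matrix ι ι ℝ, T.IsSymm ∧ T * F = G ∧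
      finrank ℝ (LinearMap.ker T.mulVecLin) = d := by
    obtain ⟨E, hE⟩ := exists_mul_eq_one_of_injective hF
    obtain ⟨T, hT, hTF⟩ := exists_isSymm_mul_eq_of_mul_eq_one hE hFG
    exact ⟨_, T, hT, hTF, rfl⟩
  -- Take a solution whose kernel has least dimension: a kernel vector outside `range F` would
  -- let a rank-one correction vanishing on `range F` shrink that kernel.
  obtain ⟨T, hT, hTF, hd⟩ := Nat.find_spec hex
  refine ⟨T, hT, hTF, fun u hu => by_contra fun huF => ?_⟩
  obtain ⟨b, hbF, hbu⟩ := exists_vecMul_eq_zero_dotProduct_ne_zero huF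
  refine Nat.find_min hex (hd ▸ Submodule.finrank_lt_finrank_of_lt
    (ker_add_vecMulVec_self_lt hT hu hbu)) ⟨T + vecMulVec b b, hT.add ?_, ?_, rfl⟩
  · exact transpose_vecMulVec b b
  · rw [Matrix.add_mul, vecMulVec_mul, hbF, hTF, add_eq_left]
    ext
    simp [vecMulVec_apply]

theorem exists_isSymm_mul_eq_ker_eq_range {μ : Type*} [Fintype μ] [DecidableEq μ]
    {J B : Matrix ι κ ℝ} {K : Matrix ι μ ℝ} (hJ : Function.Injective J.mulVec)
    (hB : Function.Injective B.mulVec) (hK : Function.Injective K.mulVec) (hBK : Bᵀ * K = 0)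
    (hKJ : Disjoint (LinearMap.range K.mulVecLin) (LinearMap.range J.mulVecLin))
    (hJB : (Jᵀ * B).IsSymm) :
    ∃ T : Matrix ι ι ℝ, T.IsSymm ∧ T * J = B ∧
      LinearMap.ker T.mulVecLin = LinearMap.range K.mulVecLin := by
  have hF : Function.Injective (fromCols J K).mulVec := by
    rw [← coe_mulVecLin, injective_iff_map_eq_zero]
    intro c hc
    replace hc : J *ᵥ (c ∘ Sum.inl) + K *ᵥ (c ∘ Sum.inr) = 0 := by simpa using hc
    have hJc : J *ᵥ (c ∘ Sum.inl) = 0 := by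
      refine (Submodule.disjoint_def.mp hKJ.symm) _ ⟨c ∘ Sum.inl, rfl⟩ ⟨-(c ∘ Sum.inr), ?_⟩
      simp [mulVec_neg, eq_neg_of_add_eq_zero_left hc]
    have hKc : K *ᵥ (c ∘ Sum.inr) = 0 := by rwa [hJc, zero_add] at hc
    have h₁ := hJ (hJc.trans (mulVec_zero J).symm)
    have h₂ := hK (hKc.trans (mulVec_zero K).symm)
    ext (i | i)
    exacts [congrFun h₁ i, congrFun h₂ i]
  have hFG : ((fromCols J K)ᵀ * fromCols B 0).IsSymm := by
    have hKB : Kᵀ * B = 0 := by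
      rw [← transpose_transpose B, ← transpose_mul, hBK, transpose_zero]
    rw [transpose_fromCols, fromRows_mul_fromCols, hKB, Matrix.mul_zero, Matrix.mul_zero]
    exact hJB.fromBlocks (by simp) isSymm_zero
  obtain ⟨T, hT, hTF, hker⟩ := exists_isSymm_mul_eq_ker_le_range hF hFG
  rw [mul_fromCols, fromCols_ext_iff] at hTF
  refine ⟨T, hT, hTF.1, le_antisymm (fun x hx => ?_) ?_⟩
  · -- on `range [J K]` the map `T` acts as `[B 0]`, so a kernel vector has no `J`-part
    obtain ⟨c, rfl⟩ := hker hx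
    have hBc : B *ᵥ (c ∘ Sum.inl) = 0 := by
      simpa [mulVec_add, mulVec_mulVec, hTF.1, hTF.2] using LinearMap.mem_ker.mp hx
    have h₁ := hB (hBc.trans (mulVec_zero B).symm)
    exact ⟨c ∘ Sum.inr, by simp [h₁]⟩
  · rintro _ ⟨c, rfl⟩
    simp [mulVec_mulVec, hTF.2]

end SymmetricSolutions

theorem Submodule.exists_linearIndependent_disjoint {K V : Type*} [Field K] [AddCommGroup V]
    [Module K V] [FiniteDimensional K V] {R W : Submodule K V} {m : ℕ}
    (hm : m + finrank K ↥(R ⊓ W) ≤ finrank K R) :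
    ∃ k : Fin m → V, LinearIndependent K k ∧ (∀ r, k r ∈ R) ∧
      Disjoint (Submodule.span K (Set.range k)) W := by
  obtain ⟨Q, hQ⟩ := Submodule.exists_isCompl ((R ⊓ W).comap R.subtype)
  have hQdim : finrank K Q + finrank K ↥(R ⊓ W) = finrank K R := by
    rw [← (Submodule.comapSubtypeEquivOfLe inf_le_left).finrank_eq, add_comm]
    exact Submodule.finrank_add_eq_of_isCompl hQ
  obtain ⟨f, hf⟩ := exists_linearIndependent_of_le_finrank (R := K) (M := Q) (n := m) (by omega)
  have hQW : Disjoint (Q.map R.subtype) W := by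
    refine Submodule.disjoint_def.mpr fun _ ⟨y, hyQ, hy⟩ hyW => ?_
    subst hy
    have : y ∈ Q ⊓ (R ⊓ W).comap R.subtype := ⟨hyQ, y.2, hyW⟩
    rw [hQ.symm.inf_eq_bot, Submodule.mem_bot] at this
    simp [this]
  refine ⟨fun r => f r, hf.map' (R.subtype ∘ₗ Q.subtype) ?_, fun r => (f r : R).2,
    hQW.mono_left (Submodule.span_le.mpr ?_)⟩
  · exact LinearMap.ker_eq_bot.mpr (R.injective_subtype.comp Q.injective_subtype)
  · rintro _ ⟨r, rfl⟩
    exact ⟨f r, (f r).2, rfl⟩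

section PrescribedKernel

variable {ι κ : Type*} [Fintype ι] [Fintype κ]

theorem finrank_ker_transpose_inf_range_add_rank {J : Matrix ι κ ℝ}
    (hJ : Function.Injective J.mulVec) (B : Matrix ι κ ℝ) :
    finrank ℝ ↥(LinearMap.ker Bᵀ.mulVecLin ⊓ LinearMap.range J.mulVecLin) + (Jᵀ * B).rank =
      Fintype.card κ := by
  have hmap : LinearMap.ker Bᵀ.mulVecLin ⊓ LinearMap.range J.mulVecLin =
      (LinearMap.ker (Bᵀ * J).mulVecLin).map J.mulVecLin := by
    rw [Matrix.mulVecLin_mul, LinearMap.ker_comp, Submodule.map_comap_eq, inf_comm]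
  rw [hmap, ← (Submodule.equivMapOfInjective _ hJ _).finrank_eq, ← rank_transpose (Jᵀ * B),
    transpose_mul, transpose_transpose, add_comm, Matrix.rank_add_finrank_ker]

theorem exists_isSymm_mul_eq_rank_add_eq [DecidableEq κ] {J B : Matrix ι κ ℝ} {m : ℕ}
    (hJ : Function.Injective J.mulVec) (hB : Function.Injective B.mulVec)
    (hJB : (Jᵀ * B).IsSymm) (hm : m + 2 * Fintype.card κ ≤ (Jᵀ * B).rank + Fintype.card ι) :
    ∃ T : Matrix ι ι ℝ, T.IsSymm ∧ T * J = B ∧ T.rank + m = Fintype.card ι := by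
  have hR : finrank ℝ (LinearMap.ker Bᵀ.mulVecLin) + Fintype.card κ = Fintype.card ι := by
    have hBt : Bᵀ.rank = Fintype.card κ := by
      rw [rank_transpose]
      simpa using (mulVec_injective_iff.mp hB).rank_matrix
    rw [← hBt, add_comm, Matrix.rank_add_finrank_ker]
  have hRW := finrank_ker_transpose_inf_range_add_rank hJ B
  obtain ⟨k, hk, hkB, hkJ⟩ :=
    Submodule.exists_linearIndependent_disjoint (m := m) (R := LinearMap.ker Bᵀ.mulVecLin)
      (W := LinearMap.range J.mulVecLin) (by omega)
  have hrange : LinearMap.range (of k)ᵀ.mulVecLin = Submodule.span ℝ (Set.range k) := by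
    rw [range_mulVecLin, col_transpose]
    rfl
  obtain ⟨T, hT, hTJ, hker⟩ := exists_isSymm_mul_eq_ker_eq_range (K := (of k)ᵀ) hJ hB
    (mulVec_injective_iff.mpr (by rwa [col_transpose])) (by ext i r; exact congrFun (hkB r) i)
    (hrange ▸ hkJ) hJB
  refine ⟨T, hT, hTJ, ?_⟩
  rw [← Matrix.rank_add_finrank_ker T, hker, hrange, finrank_span_eq_card hk, Fintype.card_fin]

end PrescribedKernel

section Spectral

variable {ι : Type*} [Fintype ι] [DecidableEq ι]

theorem Matrix.IsSymm.exists_mul_eq_mul_diagonal {T : Matrix ι ι ℝ} (hT : T.IsSymm) :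
    ∃ (U : Matrix ι ι ℝ) (η : ι → ℝ), U * Uᵀ = 1 ∧ T * U = U * diagonal η ∧
      T.rank = Fintype.card {k // η k ≠ 0} := by
  have hH : T.IsHermitian := by rwa [IsHermitian, conjTranspose_eq_transpose_of_trivial]
  have hU := hH.eigenvectorUnitary.2
  rw [Unitary.mem_iff, star_eq_conjTranspose, conjTranspose_eq_transpose_of_trivial] at hU
  set U : Matrix ι ι ℝ := ↑hH.eigenvectorUnitary
  have hspec : T = U * diagonal hH.eigenvalues * Uᵀ := by
    simpa [star_eq_conjTranspose, conjTranspose_eq_transpose_of_trivial, Function.comp_def]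
      using hH.spectral_theorem
  refine ⟨U, hH.eigenvalues, hU.2, ?_, hH.rank_eq_card_non_zero_eigs⟩
  conv_lhs => rw [hspec, Matrix.mul_assoc, hU.1, Matrix.mul_one]

theorem Matrix.PosDef.exists_isUnit_eq_transpose_mul_self {M : Matrix ι ι ℝ} (hM : M.PosDef) :
    ∃ C : Matrix ι ι ℝ, IsUnit C ∧ M = Cᵀ * C := by
  open scoped MatrixOrder in
  obtain ⟨C, hC, -, hCC⟩ := CFC.exists_sqrt_of_isSelfAdjoint_of_quasispectrumRestricts
    hM.posSemidef.isHermitian (QuasispectrumRestricts.nnreal_of_nonneg hM.posSemidef.nonneg)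
  refine ⟨C, isUnit_of_mul_isUnit_left (hCC ▸ hM.isUnit), ?_⟩
  rw [← hCC, ← conjTranspose_eq_transpose_of_trivial, ← star_eq_conjTranspose, hC.star_eq]

theorem transpose_mul_transpose_mul_eq_mul_diagonal {κ R : Type*} [CommRing R]
    {C T U : Matrix ι ι R} {J X : Matrix ι κ R} {η : ι → R} {t : R} (hT : T.IsSymm)
    (hTC : T * (C * J) = C * (X - t • J)) (hTU : T * U = U * diagonal η) :
    Xᵀ * (Cᵀ * U) = Jᵀ * (Cᵀ * U) * diagonal fun k => η k + t := by
  have hCX : C * X = (T + t • 1) * (C * J) := by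
    rw [Matrix.add_mul, hTC, Matrix.smul_mul, Matrix.one_mul, Matrix.mul_sub, Matrix.mul_smul,
      sub_add_cancel]
  have hU : (T + t • 1) * U = U * diagonal fun k => η k + t := by
    ext i j
    simp [Matrix.add_mul, hTU, mul_diagonal, mul_add, mul_comm]
  calc Xᵀ * (Cᵀ * U) = (C * X)ᵀ * U := by rw [transpose_mul, Matrix.mul_assoc]
    _ = Jᵀ * Cᵀ * ((T + t • 1) * U) := by
      rw [hCX, transpose_mul, transpose_mul, (hT.add (isSymm_one.smul t)).eq]
      simp only [Matrix.mul_assoc]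
    _ = Jᵀ * (Cᵀ * U) * diagonal fun k => η k + t := by
      rw [hU]
      simp only [Matrix.mul_assoc]

end Spectral

section Atoms

variable {κ : Type*} [Fintype κ]

theorem rank_sum_vecMulVec_self {σ m : Type*} [Fintype σ] [Fintype m] {w : σ → m → ℝ}
    (hw : LinearIndependent ℝ w) : (∑ k, vecMulVec (w k) (w k)).rank = Fintype.card σ := by
  have hgram : ∑ k, vecMulVec (w k) (w k) = (of w)ᵀ * of w := by
    ext a b
    simp [mul_apply, vecMulVec_apply, Matrix.sum_apply]
  rw [hgram, rank_transpose_mul_self]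
  exact hw.rank_matrix

theorem exists_injective_comp_surjective {α : Type*} (ξ : κ → α) :
    ∃ (ℓ : ℕ) (x : Fin ℓ → α) (g : κ → Fin ℓ),
      Function.Injective x ∧ Function.Surjective g ∧ ∀ k, x (g k) = ξ k := by
  classical
  let e := Fintype.equivFin (Set.range ξ)
  exact ⟨_, Subtype.val ∘ e.symm, e ∘ Set.rangeFactorization ξ,
    Subtype.val_injective.comp e.symm.injective,
    e.surjective.comp Set.rangeFactorization_surjective, fun k => by simp [Set.rangeFactorization]⟩

theorem multiplicityEq_card_subtype {p ℓ : ℕ} {ξ : κ → ℝ} {x : Fin ℓ → ℝ} {g : κ → Fin ℓ}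
    {A : Fin ℓ → Matrix (Fin p) (Fin p) ℝ} (hx : Function.Injective x)
    (hxg : ∀ k, x (g k) = ξ k) (hA : ∀ j, (A j).rank = Fintype.card {k // g k = j}) (t : ℝ) :
    MultiplicityEq ℓ x A t (Fintype.card {k // ξ k = t}) := by
  by_cases ht : ∃ j, x j = t
  · obtain ⟨j, rfl⟩ := ht
    refine .inl ⟨j, rfl, (hA j).trans (Fintype.card_congr ?_)⟩
    exact Equiv.subtypeEquivRight fun k => by rw [← hxg, hx.eq_iff]
  · rw [not_exists] at ht
    exact .inr ⟨ht, Fintype.card_eq_zero_iff.mpr ⟨fun ⟨k, hk⟩ => ht (g k) (by rw [hxg, hk])⟩⟩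

theorem exists_atoms_of_rankOne {p : ℕ} (ξ : κ → ℝ) (w : κ → Fin p → ℝ)
    (hw : ∀ s, LinearIndependent ℝ fun k : {k // ξ k = s} => w k) :
    ∃ (ℓ : ℕ) (x : Fin ℓ → ℝ) (A : Fin ℓ → Matrix (Fin p) (Fin p) ℝ),
      Function.Injective x ∧ (∀ j, A j ≠ 0 ∧ (A j).PosSemidef) ∧
      (∀ i : ℕ, ∑ j, x j ^ i • A j = ∑ k, ξ k ^ i • vecMulVec (w k) (w k)) ∧
      ∑ j, (A j).rank = Fintype.card κ ∧
      ∀ t, MultiplicityEq ℓ x A t (Fintype.card {k // ξ k = t}) := by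
  classical
  obtain ⟨ℓ, x, g, hx, hg, hxg⟩ := exists_injective_comp_surjective ξ
  let A j := ∑ k : {k // g k = j}, vecMulVec (w k) (w k)
  have hrank j : (A j).rank = Fintype.card {k // g k = j} := by
    let e : {k // g k = j} ≃ {k // ξ k = x j} :=
      Equiv.subtypeEquivRight fun k => by rw [← hxg, hx.eq_iff]
    exact rank_sum_vecMulVec_self ((hw (x j)).comp e e.injective)
  refine ⟨ℓ, x, A, hx, fun j => ⟨fun hA => ?_, ?_⟩, fun i => ?_, ?_,
    multiplicityEq_card_subtype hx hxg hrank⟩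
  · obtain ⟨k, hk⟩ := hg j
    have := hrank j
    rw [hA, rank_zero, eq_comm, Fintype.card_eq_zero_iff] at this
    exact this.false ⟨k, hk⟩
  · refine posSemidef_sum _ fun k _ => ?_
    simpa using posSemidef_vecMulVec_self_star (w k)
  · rw [← Fintype.sum_fiberwise g]
    refine Finset.sum_congr rfl fun j _ => ?_
    rw [Finset.smul_sum]
    exact Finset.sum_congr rfl fun k _ => by rw [← hxg, k.2]
  · calc ∑ j, (A j).rank = ∑ j, ∑ _k : {k // g k = j}, 1 := by simp [hrank]
      _ = Fintype.card κ := by rw [Fintype.sum_fiberwise g fun _ => 1]; simp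

end Atoms

/-- Block indices are pairs `(degree, coordinate)`. Reading vectors as coefficient vectors of
`ℝᵖ`-valued polynomials, `inclusionMatrix p n` regards a polynomial of degree `< n` as one of degree
`≤ n`, and `shiftMatrix p n` multiplies it by `x`. -/
def inclusionMatrix (p n : ℕ) : Matrix (Fin (n + 1) × Fin p) (Fin n × Fin p) ℝ :=
  (1 : Matrix (Fin (n + 1) × Fin p) (Fin (n + 1) × Fin p) ℝ).submatrix id
    (Prod.map Fin.castSucc id)

def shiftMatrix (p n : ℕ) : Matrix (Fin (n + 1) × Fin p) (Fin n × Fin p) ℝ :=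
  (1 : Matrix (Fin (n + 1) × Fin p) (Fin (n + 1) × Fin p) ℝ).submatrix id (Prod.map Fin.succ id)

section Shift

variable {p n : ℕ}

theorem mul_inclusionMatrix {α : Type*} (A : Matrix α (Fin (n + 1) × Fin p) ℝ) :
    A * inclusionMatrix p n = A.submatrix id (Prod.map Fin.castSucc id) :=
  mul_submatrix_one (Equiv.refl _) _ A

theorem mul_shiftMatrix {α : Type*} (A : Matrix α (Fin (n + 1) × Fin p) ℝ) :
    A * shiftMatrix p n = A.submatrix id (Prod.map Fin.succ id) :=
  mul_submatrix_one (Equiv.refl _) _ A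

theorem transpose_inclusionMatrix_mul {α : Type*} (A : Matrix (Fin (n + 1) × Fin p) α ℝ) :
    (inclusionMatrix p n)ᵀ * A = A.submatrix (Prod.map Fin.castSucc id) id := by
  rw [inclusionMatrix, transpose_submatrix, transpose_one]
  exact one_submatrix_mul _ (Equiv.refl _) A

theorem transpose_shiftMatrix_mul {α : Type*} (A : Matrix (Fin (n + 1) × Fin p) α ℝ) :
    (shiftMatrix p n)ᵀ * A = A.submatrix (Prod.map Fin.succ id) id := by
  rw [shiftMatrix, transpose_submatrix, transpose_one]
  exact one_submatrix_mul _ (Equiv.refl _) A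

theorem transpose_inclusionMatrix_mulVec (u : Fin (n + 1) × Fin p → ℝ) :
    (inclusionMatrix p n)ᵀ *ᵥ u = u ∘ Prod.map Fin.castSucc id := by
  rw [inclusionMatrix, transpose_submatrix, transpose_one]
  simpa using submatrix_mulVec_equiv (1 : Matrix (Fin (n + 1) × Fin p) _ ℝ) u
    (Prod.map Fin.castSucc id) (Equiv.refl _)

theorem transpose_shiftMatrix_mulVec (u : Fin (n + 1) × Fin p → ℝ) :
    (shiftMatrix p n)ᵀ *ᵥ u = u ∘ Prod.map Fin.succ id := by
  rw [shiftMatrix, transpose_submatrix, transpose_one]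
  simpa using submatrix_mulVec_equiv (1 : Matrix (Fin (n + 1) × Fin p) _ ℝ) u
    (Prod.map Fin.succ id) (Equiv.refl _)

theorem inclusionMatrix_mulVec_last (v : Fin n × Fin p → ℝ) (a : Fin p) :
    (inclusionMatrix p n *ᵥ v) (Fin.last n, a) = 0 := by
  simp [inclusionMatrix, mulVec, dotProduct, one_apply, Prod.ext_iff,
    (Fin.castSucc_ne_last _).symm]

theorem transpose_inclusionMatrix_mul_self :
    (inclusionMatrix p n)ᵀ * inclusionMatrix p n = 1 := by
  rw [transpose_inclusionMatrix_mul, inclusionMatrix, submatrix_submatrix]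
  exact submatrix_one _ ((Fin.castSucc_injective n).prodMap Function.injective_id)

theorem transpose_shiftMatrix_mul_self : (shiftMatrix p n)ᵀ * shiftMatrix p n = 1 := by
  rw [transpose_shiftMatrix_mul, shiftMatrix, submatrix_submatrix]
  exact submatrix_one _ ((Fin.succ_injective n).prodMap Function.injective_id)

theorem inclusionMatrix_mulVec_injective : Function.Injective (inclusionMatrix p n).mulVec :=
  fun v w h => by
    simpa [mulVec_mulVec, transpose_inclusionMatrix_mul_self] using
      congrArg ((inclusionMatrix p n)ᵀ *ᵥ ·) h

theorem shiftMatrix_sub_smul_inclusionMatrix_mulVec_injective (t : ℝ) :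
    Function.Injective (shiftMatrix p n - t • inclusionMatrix p n).mulVec := by
  rw [← coe_mulVecLin, injective_iff_map_eq_zero]
  intro v hv
  set u := inclusionMatrix p n *ᵥ v
  have hv' : shiftMatrix p n *ᵥ v = t • u := by
    simpa [sub_mulVec, smul_mulVec, sub_eq_zero] using hv
  have hJu : (inclusionMatrix p n)ᵀ *ᵥ u = v := by
    rw [mulVec_mulVec, transpose_inclusionMatrix_mul_self, one_mulVec]
  have hXu : t • (shiftMatrix p n)ᵀ *ᵥ u = v := by
    rw [← mulVec_smul, ← hv', mulVec_mulVec, transpose_shiftMatrix_mul_self, one_mulVec]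
  -- `u (i, ·) = t • u (i + 1, ·)` and `u (n, ·) = 0`, so `u` vanishes from the top degree down
  have hu : ∀ i a, u (i, a) = 0 := by
    refine fun i => Fin.reverseInduction (fun a => inclusionMatrix_mulVec_last v a)
      (fun i ih a => ?_) i
    have := congrFun (hJu.trans hXu.symm) (i, a)
    rw [transpose_inclusionMatrix_mulVec, Pi.smul_apply, transpose_shiftMatrix_mulVec] at this
    simpa [ih] using this
  rw [← hJu, show u = 0 from funext fun ⟨i, a⟩ => hu i a, mulVec_zero]

theorem locMatrix_eq (t : ℝ) (S : ℕ → Matrix (Fin p) (Fin p) ℝ) :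
    locMatrix p n t S = (inclusionMatrix p n)ᵀ * momentMatrix p n S *
      (shiftMatrix p n - t • inclusionMatrix p n) := by
  rw [Matrix.mul_sub, Matrix.mul_smul, mul_shiftMatrix, mul_inclusionMatrix,
    transpose_inclusionMatrix_mul]
  ext ⟨i, a⟩ ⟨j, b⟩
  simp [locMatrix, momentMatrix, add_assoc]

theorem isSymm_locMatrix (t : ℝ) {S : ℕ → Matrix (Fin p) (Fin p) ℝ}
    (hS : ∀ i ≤ 2 * n, (S i).IsSymm) : (locMatrix p n t S).IsSymm := by
  refine IsSymm.ext fun ⟨i, a⟩ ⟨j, b⟩ => ?_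
  have := i.isLt
  have := j.isLt
  simp only [locMatrix, add_comm (j : ℕ)]
  rw [(hS (i + j + 1) (by omega)).apply a b, (hS (i + j) (by omega)).apply a b]

end Shift

section Quadrature

variable {p n : ℕ}

theorem apply_eq_pow_mul_of_shift {κ : Type*} [Fintype κ] [DecidableEq κ]
    {V : Matrix (Fin (n + 1) × Fin p) κ ℝ} {ξ : κ → ℝ}
    (hshift : (shiftMatrix p n)ᵀ * V = (inclusionMatrix p n)ᵀ * V * diagonal ξ)
    (i : Fin (n + 1)) (a : Fin p) (k : κ) : V (i, a) k = ξ k ^ (i : ℕ) * V (0, a) k := by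
  induction i using Fin.induction with
  | zero => simp
  | succ i ih =>
    have := congrFun (congrFun hshift (i, a)) k
    rw [transpose_shiftMatrix_mul, transpose_inclusionMatrix_mul, mul_diagonal] at this
    simp only [submatrix_apply, Prod.map_apply, id_eq] at this
    rw [this, ih, Fin.val_succ, Fin.val_castSucc, pow_succ]
    ring

theorem exists_isMinimalRepMeasure_of_factorization {S : ℕ → Matrix (Fin p) (Fin p) ℝ}
    {V : Matrix (Fin (n + 1) × Fin p) (Fin (n + 1) × Fin p) ℝ} {ξ : Fin (n + 1) × Fin p → ℝ}
    (hV : IsUnit V) (hMV : momentMatrix p n S = V * Vᵀ)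
    (hshift : (shiftMatrix p n)ᵀ * V = (inclusionMatrix p n)ᵀ * V * diagonal ξ) (t : ℝ) :
    ∃ (ℓ : ℕ) (x : Fin ℓ → ℝ) (A : Fin ℓ → Matrix (Fin p) (Fin p) ℝ),
      IsMinimalRepMeasure p n ℓ S x A ∧ MultiplicityEq ℓ x A t (Fintype.card {k // ξ k = t}) := by
  set w : Fin (n + 1) × Fin p → Fin p → ℝ := fun k a => V (0, a) k
  have hV' := apply_eq_pow_mul_of_shift hshift
  have hS : ∀ D ≤ 2 * n, S D = ∑ k, ξ k ^ D • vecMulVec (w k) (w k) := by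
    intro D hD
    ext a b
    have := congrFun (congrFun hMV (⟨min D n, by omega⟩, a)) (⟨D - min D n, by omega⟩, b)
    simp only [momentMatrix, Nat.add_sub_cancel' (min_le_left D n), mul_apply, transpose_apply,
      hV' ⟨min D n, _⟩ a, hV' ⟨D - min D n, _⟩ b] at this
    simp only [this, Matrix.sum_apply, Matrix.smul_apply, vecMulVec_apply, smul_eq_mul, w]
    refine Finset.sum_congr rfl fun k _ => ?_
    rw [← pow_mul_pow_sub (ξ k) (min_le_left D n)]
    ring
  -- on a fiber `ξ = s` the columns of `V` are the images of the `w k` under `w ↦ (sⁱ w)ᵢ`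
  have hw s : LinearIndependent ℝ fun k : {k // ξ k = s} => w k := by
    let Φ : (Fin p → ℝ) →ₗ[ℝ] Fin (n + 1) × Fin p → ℝ :=
      LinearMap.pi fun α => s ^ (α.1 : ℕ) • LinearMap.proj α.2
    have hcols : LinearIndependent ℝ V.col := linearIndependent_cols_of_isUnit hV
    refine LinearIndependent.of_comp Φ ?_
    convert hcols.comp _ Subtype.val_injective using 1
    ext ⟨k, hk⟩ ⟨i, a⟩
    simp [Φ, w, hV' i a k, hk]
  obtain ⟨ℓ, x, A, hx, hA, hmom, hrank, hmult⟩ := exists_atoms_of_rankOne ξ w hw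
  refine ⟨ℓ, x, A, ⟨hx, hA, fun i hi => (hS i hi).trans (hmom i).symm, ?_⟩, hmult t⟩
  simpa [mul_comm] using hrank

theorem exists_isMinimalRepMeasure_of_isSymm_mul_eq {S : ℕ → Matrix (Fin p) (Fin p) ℝ}
    {C T : Matrix (Fin (n + 1) × Fin p) (Fin (n + 1) × Fin p) ℝ} {t : ℝ} (hC : IsUnit C)
    (hMC : momentMatrix p n S = Cᵀ * C) (hT : T.IsSymm)
    (hTC : T * (C * inclusionMatrix p n) = C * (shiftMatrix p n - t • inclusionMatrix p n)) :
    ∃ (ℓ : ℕ) (x : Fin ℓ → ℝ) (A : Fin ℓ → Matrix (Fin p) (Fin p) ℝ),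
      IsMinimalRepMeasure p n ℓ S x A ∧ MultiplicityEq ℓ x A t ((n + 1) * p - T.rank) := by
  obtain ⟨U, η, hU, hTU, hη⟩ := hT.exists_mul_eq_mul_diagonal
  have hV : IsUnit (Cᵀ * U) :=
    ((isUnit_transpose C).mpr hC).mul
      ((isUnit_iff_isUnit_det U).mpr (isUnit_det_of_right_inverse hU))
  have hMV : momentMatrix p n S = (Cᵀ * U) * (Cᵀ * U)ᵀ := by
    rw [hMC, transpose_mul, transpose_transpose, Matrix.mul_assoc, ← Matrix.mul_assoc U, hU,
      Matrix.one_mul]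
  obtain ⟨ℓ, x, A, hA, hmult⟩ := exists_isMinimalRepMeasure_of_factorization hV hMV
    (transpose_mul_transpose_mul_eq_mul_diagonal hT hTC hTU) t
  refine ⟨ℓ, x, A, hA, ?_⟩
  convert hmult using 1
  rw [hη, show (n + 1) * p = Fintype.card (Fin (n + 1) × Fin p) by simp,
    ← Fintype.card_subtype_compl]
  simp

end Quadrature

theorem gaussian_quadrature_prescribed_atom_sufficiency_general (p n : ℕ)
    (S : ℕ → Matrix (Fin p) (Fin p) ℝ)
    (hSsym : ∀ i ≤ 2 * n, (S i).IsSymm)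
    (hM : (momentMatrix p n S).PosDef)
    (t : ℝ) (m : ℕ)
    (hm : m + (n - 1) * p ≤ (locMatrix p n t S).rank) :
    ∃ (ℓ : ℕ) (x : Fin ℓ → ℝ) (A : Fin ℓ → Matrix (Fin p) (Fin p) ℝ),
      IsMinimalRepMeasure p n ℓ S x A ∧ MultiplicityEq ℓ x A t m := by
  obtain ⟨C, hC, hMC⟩ := hM.exists_isUnit_eq_transpose_mul_self
  have hloc : (C * inclusionMatrix p n)ᵀ * (C * (shiftMatrix p n - t • inclusionMatrix p n)) =
      locMatrix p n t S := by
    rw [locMatrix_eq, hMC]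
    simp only [transpose_mul, Matrix.mul_assoc]
  have hCinj := mulVec_injective_of_isUnit hC
  obtain ⟨T, hT, hTC, hrank⟩ := exists_isSymm_mul_eq_rank_add_eq (m := m)
    (mulVec_injective_mul hCinj inclusionMatrix_mulVec_injective)
    (mulVec_injective_mul hCinj (shiftMatrix_sub_smul_inclusionMatrix_mulVec_injective t))
    (hloc ▸ isSymm_locMatrix t hSsym)
    (by rw [hloc]; rcases n with _ | n <;> simp [Fintype.card_prod] at hm ⊢ <;> nlinarith)
  obtain ⟨ℓ, x, A, hA, hmult⟩ := exists_isMinimalRepMeasure_of_isSymm_mul_eq hC hMC hT hTC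
  refine ⟨ℓ, x, A, hA, ?_⟩
  simp only [Fintype.card_prod, Fintype.card_fin] at hrank
  rwa [show (n + 1) * p - T.rank = m by omega] at hmult

/-- If `m ≤ rank H_{x-t}(n-1) - (n-1)p`, then there exists a minimal representing
measure with multiplicity `m` at `t`. -/
theorem gaussian_quadrature_prescribed_atom_sufficiency (p n : ℕ) (hp : 1 ≤ p) (hn : 1 ≤ n)
    (S : ℕ → Matrix (Fin p) (Fin p) ℝ)
    (hSsym : ∀ i ≤ 2 * n, (S i).IsSymm)
    (hM : (momentMatrix p n S).PosDef)
    (t : ℝ) (m : ℕ)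
    (hm : m + (n - 1) * p ≤ (locMatrix p n t S).rank) :
    ∃ (ℓ : ℕ) (x : Fin ℓ → ℝ) (A : Fin ℓ → Matrix (Fin p) (Fin p) ℝ),
      IsMinimalRepMeasure p n ℓ S x A ∧ MultiplicityEq ℓ x A t m :=
  gaussian_quadrature_prescribed_atom_sufficiency_general p n S hSsym hM t m hm
end

section
/- Let p, n ≥ 1 and let S = (S_0, …, S_{2n}) be a truncated matrix moment sequence whose moment matrix M(n) is positive definite, and fix t ∈ ℝ. Then there exists a minimal representing measure for S (pairwise distinct x_1,…,x_ℓ ∈ ℝ and nonzero PSD symmetric p×p matrices A_1,…,A_ℓ with S_i = Σ_j x_j^i A_j for 0 ≤ i ≤ 2n and Σ_j rank A_j = (n+1)p) whose multiplicity at t is 0, i.e., such that t ∉ {x_1,…,x_ℓ}. -/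
/-!
Extend the data by a free symmetric moment `S (2n+1) = C`, and let `W` be the shifted moment
matrix (blocks `S (i+j+1)`) next to the moment matrix `M`. A kernel vector of `W - t M` with
vanishing last block is zero: on such vectors `W` acts as `M` after shifting the blocks down by
one, and `shift v = t v` kills the blocks from the last one upwards. Hence rank-one corrections of
the corner `C` strictly shrink the kernel, and some `C` makes `W - t M` invertible.

Writing `M = Lᵀ L`, the symmetric matrix `H = L⁻ᵀ W L⁻¹` sends the block column `L E_b` to
`L E_(b+1)`, so `S i = Bᵀ H^i B` for `i ≤ 2n` with `B = L E_0`, and the columns of the `H^b B` span.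
Grouping the spectral decomposition of `H` by distinct eigenvalues gives the measure: its atoms are
eigenvalues of `H`, hence differ from `t`, and by the spanning property the mass at an eigenvalue
has rank equal to its multiplicity, so the ranks add up to `(n+1)p`.
-/

open Matrix

lemma Function.exists_fin_factorization {ι α : Type*} [Fintype ι] (d : ι → α) :
    ∃ (ℓ : ℕ) (x : Fin ℓ → α) (g : ι → Fin ℓ),
      Function.Injective x ∧ Function.Surjective g ∧ x ∘ g = d := by
  classical
  let e := Fintype.equivFin (Set.range d)
  exact ⟨_, Subtype.val ∘ e.symm, e ∘ Set.rangeFactorization d,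
    Subtype.val_injective.comp e.symm.injective,
    e.surjective.comp Set.rangeFactorization_surjective,
    funext fun k => by simp [Set.rangeFactorization]⟩

namespace Matrix

variable {ι κ K : Type*} [Fintype ι]

lemma ker_mulVecLin_add_vecMulVec_lt [Field K] {G : Matrix ι ι K} (hG : G.IsSymm)
    {v z : ι → K} (hv : G *ᵥ v = 0) (hzv : z ⬝ᵥ v ≠ 0) :
    LinearMap.ker (G + vecMulVec z z).mulVecLin < LinearMap.ker G.mulVecLin := by
  have hG' (u : ι → K) : (G + vecMulVec z z) *ᵥ u = G *ᵥ u + (z ⬝ᵥ u) • z := by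
    simp [add_mulVec, vecMulVec_mulVec]
  refine lt_of_le_of_ne (fun u hu => ?_) fun h => ?_
  · simp only [LinearMap.mem_ker, mulVecLin_apply, hG'] at hu ⊢
    have hvu : v ⬝ᵥ G *ᵥ u = 0 := by
      rw [dotProduct_mulVec, ← mulVec_transpose, hG.eq, hv, zero_dotProduct]
    have hzu : z ⬝ᵥ u = 0 := by
      have h0 : v ⬝ᵥ (G *ᵥ u + (z ⬝ᵥ u) • z) = 0 := by rw [hu, dotProduct_zero]
      rw [dotProduct_add, hvu, zero_add, dotProduct_smul, smul_eq_mul, dotProduct_comm v z,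
        mul_eq_zero] at h0
      exact h0.resolve_right hzv
    simpa [hzu] using hu
  · have hvmem : v ∈ LinearMap.ker G.mulVecLin := hv
    rw [← h, LinearMap.mem_ker, mulVecLin_apply] at hvmem
    have hz : z ≠ 0 := by rintro rfl; simp at hzv
    rw [hG', hv, zero_add, smul_eq_zero] at hvmem
    exact hvmem.elim hzv hz

theorem exists_isSymm_isUnit_add_mul_mul_transpose [DecidableEq ι] [Fintype κ] [Field K]
    [LinearOrder K] [IsStrictOrderedRing K] {G : Matrix ι ι K} (hG : G.IsSymm) (P : Matrix ι κ K)
    (h : ∀ v, G *ᵥ v = 0 → Pᵀ *ᵥ v = 0 → v = 0) :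
    ∃ C : Matrix κ κ K, C.IsSymm ∧ IsUnit (G + P * C * Pᵀ) := by
  suffices ∀ N : Submodule K (ι → K), ∀ G : Matrix ι ι K, G.IsSymm →
      (∀ v, G *ᵥ v = 0 → Pᵀ *ᵥ v = 0 → v = 0) → LinearMap.ker G.mulVecLin = N →
      ∃ C : Matrix κ κ K, C.IsSymm ∧ IsUnit (G + P * C * Pᵀ) from this _ G hG h rfl
  intro N
  induction N using WellFoundedLT.induction with
  | ind N ih =>
  intro G hG h hN
  by_cases hbot : LinearMap.ker G.mulVecLin = ⊥
  · refine ⟨0, isSymm_zero, ?_⟩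
    rw [Matrix.mul_zero, Matrix.zero_mul, add_zero]
    exact mulVec_injective_iff_isUnit.mp (LinearMap.ker_eq_bot.mp hbot)
  obtain ⟨v, hvG, hv0⟩ := (Submodule.ne_bot_iff _).mp hbot
  rw [LinearMap.mem_ker, mulVecLin_apply] at hvG
  set w := Pᵀ *ᵥ v
  have hw : w ≠ 0 := fun hw => hv0 (h v hvG hw)
  -- the rank-one correction `(P w)(P w)ᵀ` pairs with `v` to `w ⬝ᵥ w ≠ 0`
  have hlt := ker_mulVecLin_add_vecMulVec_lt hG (z := P *ᵥ w) hvG (by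
    rwa [dotProduct_comm, dotProduct_mulVec, ← mulVec_transpose, Ne, dotProduct_self_eq_zero])
  obtain ⟨C, hC, hunit⟩ := ih _ (hN ▸ hlt) (G + vecMulVec (P *ᵥ w) (P *ᵥ w))
    (hG.add (transpose_vecMulVec _ _))
    (fun u hu hPu => h u (hlt.le (LinearMap.mem_ker.mpr hu)) hPu) rfl
  refine ⟨vecMulVec w w + C, IsSymm.add (transpose_vecMulVec w w) hC, ?_⟩
  convert hunit using 1
  rw [Matrix.mul_add, Matrix.add_mul, mul_vecMulVec, vecMulVec_mul, vecMul_transpose, add_assoc]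

open scoped MatrixOrder in
lemma PosDef.exists_isUnit_eq_transpose_mul_self_s3 [DecidableEq ι]
    {M : Matrix ι ι ℝ} (hM : M.PosDef) : ∃ L : Matrix ι ι ℝ, IsUnit L ∧ M = Lᵀ * L := by
  obtain ⟨L, hL, rfl⟩ :=
    CStarAlgebra.isStrictlyPositive_iff_eq_star_mul_self.mp hM.isStrictlyPositive
  exact ⟨L, hL, by rw [star_eq_conjTranspose, conjTranspose_eq_transpose_of_trivial]⟩

lemma notMem_spectrum_transpose_inv_mul_mul_inv [DecidableEq ι] [CommRing K] {L W : Matrix ι ι K}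
    (hL : IsUnit L) {t : K} (ht : IsUnit (W - t • (Lᵀ * L))) :
    t ∉ spectrum K (L⁻¹ᵀ * W * L⁻¹) := by
  have hLdet : IsUnit L.det := (isUnit_iff_isUnit_det L).mp hL
  have hLinv : IsUnit L⁻¹ := isUnit_nonsing_inv_iff.mpr hL
  have hconj : L⁻¹ᵀ * W * L⁻¹ - t • 1 = L⁻¹ᵀ * (W - t • (Lᵀ * L)) * L⁻¹ := by
    rw [transpose_nonsing_inv]
    simp only [Matrix.mul_sub, Matrix.sub_mul, Matrix.mul_smul, Matrix.smul_mul,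
      ← Matrix.mul_assoc,
      nonsing_inv_mul _ ((isUnit_iff_isUnit_det _).mp ((isUnit_transpose L).mpr hL)),
      Matrix.one_mul, mul_nonsing_inv L hLdet]
  rw [spectrum.mem_iff, Algebra.algebraMap_eq_smul_one, ← neg_sub, hconj, not_not]
  exact ((((isUnit_transpose _).mpr hLinv).mul ht).mul hLinv).neg

def IsControllable [DecidableEq ι] [CommSemiring K] (H : Matrix ι ι K) (B : Matrix ι κ K) : Prop :=
  ∀ u : ι → K, (∀ b : ℕ, u ᵥ* (H ^ b * B) = 0) → u = 0

lemma transpose_mul_diagonal_mul_eq_sum_fiber [DecidableEq ι] [Fintype κ] {R ℓ : Type*}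
    [CommSemiring R] [Fintype ℓ] [DecidableEq ℓ] (F : Matrix ι κ R) (g : ι → ℓ) (x : ℓ → R) :
    Fᵀ * diagonal (x ∘ g) * F =
      ∑ j, x j • ((F.submatrix (Subtype.val : {k // g k = j} → ι) id)ᵀ *
        F.submatrix (Subtype.val : {k // g k = j} → ι) id) := by
  ext r c
  rw [mul_apply]
  simp only [mul_diagonal, transpose_apply, Function.comp_apply]
  simp only [sum_apply, smul_apply, mul_apply, transpose_apply, submatrix_apply, id, smul_eq_mul,
    Finset.mul_sum]
  rw [← Fintype.sum_fiberwise g]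
  refine Finset.sum_congr rfl fun j _ => Finset.sum_congr rfl fun k _ => ?_
  rw [k.2]
  ring

lemma linearIndependent_vecMul_of_isControllable [DecidableEq ι] {α : Type*} [CommRing K]
    {H : Matrix ι ι K} (hH : H.IsSymm) {B : Matrix ι κ K} (hB : H.IsControllable B)
    {v : α → ι → K} (hv : LinearIndependent K v) {y : K} (hHv : ∀ a, H *ᵥ v a = y • v a) :
    LinearIndependent K fun a => v a ᵥ* B := by
  refine hv.map (f := B.vecMulLinear) (Submodule.disjoint_def.mpr fun u hu huB => hB u fun b => ?_)
  have hHu : u ᵥ* H = y • u := by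
    have : u ∈ Module.End.eigenspace (toLin' H) y :=
      Submodule.span_le.mpr (Set.range_subset_iff.mpr fun a =>
        Module.End.mem_eigenspace_iff.mpr (by simpa using hHv a)) hu
    rw [← mulVec_transpose, hH.eq]
    simpa using Module.End.mem_eigenspace_iff.mp this
  induction b with
  | zero => simpa using huB
  | succ b ih => rw [pow_succ', Matrix.mul_assoc, ← vecMul_vecMul, hHu, smul_vecMul, ih, smul_zero]

lemma IsHermitian.transpose_mul_pow_mul [DecidableEq ι] {H : Matrix ι ι ℝ} (hH : H.IsHermitian)
    (B : Matrix ι κ ℝ) (i : ℕ) :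
    Bᵀ * H ^ i * B = ((hH.eigenvectorUnitary : Matrix ι ι ℝ)ᵀ * B)ᵀ *
      diagonal (hH.eigenvalues ^ i) * ((hH.eigenvectorUnitary : Matrix ι ι ℝ)ᵀ * B) := by
  have hpow : H ^ i = (hH.eigenvectorUnitary : Matrix ι ι ℝ) * diagonal (hH.eigenvalues ^ i) *
      (hH.eigenvectorUnitary : Matrix ι ι ℝ)ᵀ := by
    conv_lhs => rw [hH.spectral_theorem]
    rw [← map_pow, diagonal_pow, Unitary.conjStarAlgAut_apply, star_eq_conjTranspose,
      conjTranspose_eq_transpose_of_trivial]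
    rfl
  rw [hpow, transpose_mul, transpose_transpose]
  simp only [Matrix.mul_assoc]

theorem exists_quadrature_of_isControllable [DecidableEq ι] [Fintype κ] {H : Matrix ι ι ℝ}
    (hH : H.IsHermitian) (B : Matrix ι κ ℝ) (hB : H.IsControllable B) :
    ∃ (ℓ : ℕ) (x : Fin ℓ → ℝ) (A : Fin ℓ → Matrix κ κ ℝ), Function.Injective x ∧
      (∀ j, A j ≠ 0 ∧ (A j).PosSemidef) ∧ (∀ i, Bᵀ * H ^ i * B = ∑ j, x j ^ i • A j) ∧
      ∑ j, (A j).rank = Fintype.card ι ∧ ∀ j, x j ∈ spectrum ℝ H := by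
  obtain ⟨ℓ, x, g, hx, hg, hxg⟩ := Function.exists_fin_factorization hH.eigenvalues
  set U := (hH.eigenvectorUnitary : Matrix ι ι ℝ)
  set F := Uᵀ * B
  set Fj := fun j => F.submatrix (Subtype.val : {k // g k = j} → ι) id
  have hrank (j : Fin ℓ) : ((Fj j)ᵀ * Fj j).rank = Fintype.card {k // g k = j} := by
    have hv : LinearIndependent ℝ fun k : {k // g k = j} => U.col k :=
      (linearIndependent_cols_of_isUnit Unitary.isUnit_coe).comp _ Subtype.val_injective
    have hHv (k : {k // g k = j}) : H *ᵥ U.col k = x j • U.col k := by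
      have hk : x j = hH.eigenvalues k := by rw [← hxg, Function.comp_apply, k.2]
      rw [hk]
      exact hH.mulVec_eigenvectorBasis k
    have hrow : (Fj j).row = fun k : {k // g k = j} => U.col k ᵥ* B := rfl
    rw [rank_transpose_mul_self, rank_eq_finrank_span_row, hrow,
      finrank_span_eq_card (linearIndependent_vecMul_of_isControllable
        (isHermitian_iff_isSymm.mp hH) hB hv hHv)]
  refine ⟨ℓ, x, fun j => (Fj j)ᵀ * Fj j, hx, fun j => ⟨fun h0 => ?_, ?_⟩, fun i => ?_, ?_,
    fun j => ?_⟩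
  · obtain ⟨k, hk⟩ := hg j
    simp only at h0
    have := hrank j
    rw [h0, rank_zero, eq_comm, Fintype.card_eq_zero_iff] at this
    exact this.false ⟨k, hk⟩
  · simpa [conjTranspose_eq_transpose_of_trivial] using posSemidef_conjTranspose_mul_self (Fj j)
  · have hpow : hH.eigenvalues ^ i = (fun j => x j ^ i) ∘ g := by rw [← hxg]; rfl
    rw [hH.transpose_mul_pow_mul, hpow, transpose_mul_diagonal_mul_eq_sum_fiber]
  · simp only [hrank]
    rw [← Fintype.card_sigma, Fintype.card_congr (Equiv.sigmaFiberEquiv g)]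
  · obtain ⟨k, rfl⟩ := hg j
    rw [← Function.comp_apply (f := x), hxg]
    exact hH.eigenvalues_mem_spectrum_real k

end Matrix

def shiftedMomentMatrix (p n : ℕ) (S : ℕ → Matrix (Fin p) (Fin p) ℝ) :
    Matrix (Fin (n + 1) × Fin p) (Fin (n + 1) × Fin p) ℝ :=
  momentMatrix p n fun i => S (i + 1)

def blockCol (p : ℕ) {n : ℕ} (b : Fin (n + 1)) : Matrix (Fin (n + 1) × Fin p) (Fin p) ℝ :=
  Matrix.of fun i c => if i = (b, c) then 1 else 0

section MomentMatrix

variable {p n : ℕ}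

@[simp]
lemma mul_blockCol_apply {m : Type*} (A : Matrix m (Fin (n + 1) × Fin p) ℝ) (b : Fin (n + 1))
    (i : m) (c : Fin p) : (A * blockCol p b) i c = A i (b, c) := by
  simp [blockCol, mul_apply]

@[simp]
lemma vecMul_blockCol_apply (v : Fin (n + 1) × Fin p → ℝ) (b : Fin (n + 1)) (c : Fin p) :
    (v ᵥ* blockCol p b) c = v (b, c) := by
  simp [blockCol, vecMul, dotProduct]

@[simp]
lemma transpose_blockCol_mul_apply {m : Type*} (A : Matrix (Fin (n + 1) × Fin p) m ℝ)
    (b : Fin (n + 1)) (c : Fin p) (j : m) : ((blockCol p b)ᵀ * A) c j = A (b, c) j := by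
  simp [blockCol, mul_apply]

lemma transpose_blockCol_mul_momentMatrix_mul_blockCol (S : ℕ → Matrix (Fin p) (Fin p) ℝ)
    (a b : Fin (n + 1)) :
    (blockCol p a)ᵀ * momentMatrix p n S * blockCol p b = S (a + b) := by
  ext r c
  simp [momentMatrix]

lemma shiftedMomentMatrix_mul_blockCol (S : ℕ → Matrix (Fin p) (Fin p) ℝ) (b : Fin n) :
    shiftedMomentMatrix p n S * blockCol p b.castSucc = momentMatrix p n S * blockCol p b.succ := by
  ext i c
  simp [shiftedMomentMatrix, momentMatrix, add_assoc]

lemma momentMatrix_isSymm {S : ℕ → Matrix (Fin p) (Fin p) ℝ} (hS : ∀ i ≤ 2 * n, (S i).IsSymm) :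
    (momentMatrix p n S).IsSymm := by
  ext i j
  have hi := i.1.is_le
  have hj := j.1.is_le
  simp only [transpose_apply, momentMatrix, add_comm j.1.1]
  exact (hS _ (by omega)).apply i.2 j.2

lemma momentMatrix_congr {S T : ℕ → Matrix (Fin p) (Fin p) ℝ} (h : ∀ i ≤ 2 * n, S i = T i) :
    momentMatrix p n S = momentMatrix p n T := by
  ext i j
  have hi := i.1.is_le
  have hj := j.1.is_le
  simp only [momentMatrix, h _ (by omega : i.1.1 + j.1.1 ≤ 2 * n)]

lemma shiftedMomentMatrix_update (S : ℕ → Matrix (Fin p) (Fin p) ℝ)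
    (C : Matrix (Fin p) (Fin p) ℝ) :
    shiftedMomentMatrix p n (Function.update S (2 * n + 1) C) =
      shiftedMomentMatrix p n (Function.update S (2 * n + 1) 0) +
        blockCol p (Fin.last n) * C * (blockCol p (Fin.last n))ᵀ := by
  ext ⟨a, r⟩ ⟨b, c⟩
  have ha := a.is_le
  have hb := b.is_le
  by_cases hab : a = Fin.last n ∧ b = Fin.last n
  · obtain ⟨rfl, rfl⟩ := hab
    simp [shiftedMomentMatrix, momentMatrix, blockCol, mul_apply, ← two_mul]
  · have : a.1 + b.1 + 1 ≠ 2 * n + 1 := fun h =>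
      hab ⟨Fin.ext (by simp; omega), Fin.ext (by simp; omega)⟩
    rcases not_and_or.mp hab with h | h <;>
      simp [shiftedMomentMatrix, momentMatrix, blockCol, mul_apply, Function.update_of_ne this, h]

lemma shiftedMomentMatrix_mulVec_of_last_eq_zero (S : ℕ → Matrix (Fin p) (Fin p) ℝ)
    {v : Fin (n + 1) × Fin p → ℝ} (hv : ∀ c, v (Fin.last n, c) = 0) :
    shiftedMomentMatrix p n S *ᵥ v =
      momentMatrix p n S *ᵥ fun i => Fin.cases 0 (fun a => v (a.castSucc, i.2)) i.1 := by
  ext i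
  simp only [mulVec, dotProduct, Fintype.sum_prod_type]
  rw [Fin.sum_univ_castSucc, Fin.sum_univ_succ]
  simp [hv, shiftedMomentMatrix, momentMatrix, add_assoc]

lemma eq_zero_of_shiftedMomentMatrix_sub_mulVec_eq_zero {S : ℕ → Matrix (Fin p) (Fin p) ℝ}
    (hM : (momentMatrix p n S).det ≠ 0) {t : ℝ} {v : Fin (n + 1) × Fin p → ℝ}
    (hv : (shiftedMomentMatrix p n S - t • momentMatrix p n S) *ᵥ v = 0)
    (hlast : (blockCol p (Fin.last n))ᵀ *ᵥ v = 0) : v = 0 := by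
  have hlast' (c : Fin p) : v (Fin.last n, c) = 0 := by
    simpa [mulVec_transpose] using congrFun hlast c
  set w : Fin (n + 1) × Fin p → ℝ := fun i => Fin.cases 0 (fun a => v (a.castSucc, i.2)) i.1
  have hw : w = t • v := by
    refine sub_eq_zero.mp (eq_zero_of_mulVec_eq_zero hM ?_)
    rwa [mulVec_sub, mulVec_smul, ← shiftedMomentMatrix_mulVec_of_last_eq_zero S hlast',
      ← smul_mulVec, ← sub_mulVec]
  suffices ∀ a c, v (a, c) = 0 from funext fun i => this i.1 i.2
  intro a
  induction a using Fin.reverseInduction with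
  | last => exact hlast'
  | cast a ih =>
    intro c
    simpa [w, ih c] using congrFun hw (a.succ, c)

lemma shiftedMomentMatrix_isSymm {S : ℕ → Matrix (Fin p) (Fin p) ℝ}
    (hS : ∀ i ≤ 2 * n + 1, (S i).IsSymm) : (shiftedMomentMatrix p n S).IsSymm :=
  momentMatrix_isSymm fun i hi => hS (i + 1) (by omega)

lemma isSymm_update {S : ℕ → Matrix (Fin p) (Fin p) ℝ} (hS : ∀ i ≤ 2 * n, (S i).IsSymm)
    {C : Matrix (Fin p) (Fin p) ℝ} (hC : C.IsSymm) :
    ∀ i ≤ 2 * n + 1, (Function.update S (2 * n + 1) C i).IsSymm := by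
  intro i hi
  rcases eq_or_ne i (2 * n + 1) with rfl | hne
  · simpa using hC
  · rw [Function.update_of_ne hne]
    exact hS i (by omega)

lemma momentMatrix_update (S : ℕ → Matrix (Fin p) (Fin p) ℝ) (C : Matrix (Fin p) (Fin p) ℝ) :
    momentMatrix p n (Function.update S (2 * n + 1) C) = momentMatrix p n S :=
  momentMatrix_congr fun _ hi => Function.update_of_ne (by omega) _ _

theorem exists_isSymm_isUnit_shiftedMomentMatrix_update_sub {S : ℕ → Matrix (Fin p) (Fin p) ℝ}
    (hS : ∀ i ≤ 2 * n, (S i).IsSymm) (hM : (momentMatrix p n S).PosDef) (t : ℝ) :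
    ∃ C : Matrix (Fin p) (Fin p) ℝ, C.IsSymm ∧
      IsUnit (shiftedMomentMatrix p n (Function.update S (2 * n + 1) C) -
        t • momentMatrix p n S) := by
  set S₀ := Function.update S (2 * n + 1) 0
  have hG : (shiftedMomentMatrix p n S₀ - t • momentMatrix p n S).IsSymm :=
    IsSymm.sub (shiftedMomentMatrix_isSymm (isSymm_update hS isSymm_zero))
      ((momentMatrix_isSymm hS).smul t)
  obtain ⟨C, hC, hunit⟩ := exists_isSymm_isUnit_add_mul_mul_transpose hG (blockCol p (Fin.last n))
    fun v hv hlast => eq_zero_of_shiftedMomentMatrix_sub_mulVec_eq_zero (S := S₀)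
      (by rw [momentMatrix_update]; exact hM.det_pos.ne') (by rwa [momentMatrix_update]) hlast
  refine ⟨C, hC, ?_⟩
  rwa [shiftedMomentMatrix_update, add_sub_right_comm]

lemma pow_mul_eq_mul_blockCol {H L : Matrix (Fin (n + 1) × Fin p) (Fin (n + 1) × Fin p) ℝ}
    (h : ∀ b : Fin n, H * (L * blockCol p b.castSucc) = L * blockCol p b.succ) (b : Fin (n + 1)) :
    H ^ (b : ℕ) * (L * blockCol p 0 : Matrix _ (Fin p) ℝ) = L * blockCol p b := by
  induction b using Fin.induction with
  | zero => rw [Fin.val_zero, pow_zero, Matrix.one_mul]; rfl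
  | succ b ih => rw [Fin.val_succ, pow_succ', Matrix.mul_assoc, ← Fin.val_castSucc, ih, h]

theorem exists_isHermitian_moment_realization {S : ℕ → Matrix (Fin p) (Fin p) ℝ}
    (hS : ∀ i ≤ 2 * n + 1, (S i).IsSymm) (hM : (momentMatrix p n S).PosDef) {t : ℝ}
    (ht : IsUnit (shiftedMomentMatrix p n S - t • momentMatrix p n S)) :
    ∃ (H : Matrix (Fin (n + 1) × Fin p) (Fin (n + 1) × Fin p) ℝ)
      (B : Matrix (Fin (n + 1) × Fin p) (Fin p) ℝ),
      H.IsHermitian ∧ (∀ i ≤ 2 * n, S i = Bᵀ * H ^ i * B) ∧ H.IsControllable B ∧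
        t ∉ spectrum ℝ H := by
  obtain ⟨L, hL, hML⟩ := hM.exists_isUnit_eq_transpose_mul_self_s3
  have hLdet : IsUnit L.det := (isUnit_iff_isUnit_det L).mp hL
  set H := L⁻¹ᵀ * shiftedMomentMatrix p n S * L⁻¹
  set B : Matrix _ (Fin p) ℝ := L * blockCol p 0
  have hH : H.IsHermitian := by
    simpa [conjTranspose_eq_transpose_of_trivial, H] using isHermitian_conjTranspose_mul_mul L⁻¹
      (isHermitian_iff_isSymm.mpr (shiftedMomentMatrix_isSymm hS))
  have hkrylov : ∀ b : Fin (n + 1), H ^ (b : ℕ) * B = L * blockCol p b :=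
    pow_mul_eq_mul_blockCol fun b => by
      rw [Matrix.mul_assoc, nonsing_inv_mul_cancel_left _ _ hLdet, Matrix.mul_assoc,
        shiftedMomentMatrix_mul_blockCol, hML, Matrix.mul_assoc, ← Matrix.mul_assoc L⁻¹ᵀ,
        transpose_nonsing_inv, nonsing_inv_mul _ ((isUnit_iff_isUnit_det _).mp
          ((isUnit_transpose L).mpr hL)), Matrix.one_mul]
  refine ⟨H, B, hH, fun i hi => ?_, fun u hu => ?_, ?_⟩
  · obtain ⟨a, b, rfl⟩ : ∃ a b : Fin (n + 1), i = a + b :=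
      ⟨⟨min i n, by omega⟩, ⟨i - min i n, by omega⟩, by simp only; omega⟩
    calc S (a + b) = (blockCol p a)ᵀ * momentMatrix p n S * blockCol p b :=
          (transpose_blockCol_mul_momentMatrix_mul_blockCol S a b).symm
      _ = (H ^ (a : ℕ) * B)ᵀ * (H ^ (b : ℕ) * B) := by
          rw [hkrylov, hkrylov, hML, transpose_mul]; simp only [Matrix.mul_assoc]
      _ = Bᵀ * H ^ (a + b : ℕ) * B := by
          rw [transpose_mul, transpose_pow, isHermitian_iff_isSymm.mp hH, pow_add]
          simp only [Matrix.mul_assoc]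
  · refine eq_zero_of_vecMul_eq_zero ((isUnit_iff_ne_zero).mp hLdet) (funext fun ⟨b, c⟩ => ?_)
    simpa [hkrylov, ← vecMul_vecMul] using congrFun (hu b) c
  · exact Matrix.notMem_spectrum_transpose_inv_mul_mul_inv hL (hML ▸ ht)

end MomentMatrix

theorem gaussian_quadrature_atom_avoidance_general (p n : ℕ)
    (S : ℕ → Matrix (Fin p) (Fin p) ℝ)
    (hSsym : ∀ i ≤ 2 * n, (S i).IsSymm)
    (hM : (momentMatrix p n S).PosDef)
    (t : ℝ) :
    ∃ (ℓ : ℕ) (x : Fin ℓ → ℝ) (A : Fin ℓ → Matrix (Fin p) (Fin p) ℝ),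
      IsMinimalRepMeasure p n ℓ S x A ∧ ∀ j, x j ≠ t := by
  obtain ⟨C, hC, hunit⟩ := exists_isSymm_isUnit_shiftedMomentMatrix_update_sub hSsym hM t
  rw [← momentMatrix_update S C] at hunit hM
  obtain ⟨H, B, hH, hmom, hB, ht⟩ :=
    exists_isHermitian_moment_realization (isSymm_update hSsym hC) hM hunit
  obtain ⟨ℓ, x, A, hx, hA, hsum, hrank, hspec⟩ := exists_quadrature_of_isControllable hH B hB
  refine ⟨ℓ, x, A, ⟨hx, hA, fun i hi => ?_, by simpa [mul_comm] using hrank⟩,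
    fun j hj => ht (hj ▸ hspec j)⟩
  rw [← hsum, ← hmom i hi, Function.update_of_ne (by omega)]

/-- Corollary 1.2 (atom avoidance): there is always a minimal representing measure
avoiding any prescribed point `t`. -/
theorem gaussian_quadrature_atom_avoidance (p n : ℕ) (hp : 1 ≤ p) (hn : 1 ≤ n)
    (S : ℕ → Matrix (Fin p) (Fin p) ℝ)
    (hSsym : ∀ i ≤ 2 * n, (S i).IsSymm)
    (hM : (momentMatrix p n S).PosDef)
    (t : ℝ) :
    ∃ (ℓ : ℕ) (x : Fin ℓ → ℝ) (A : Fin ℓ → Matrix (Fin p) (Fin p) ℝ),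
      IsMinimalRepMeasure p n ℓ S x A ∧ ∀ j, x j ≠ t :=
  gaussian_quadrature_atom_avoidance_general p n S hSsym hM t
end

section
/- Let n_1, n_2, p ≥ 1 and let S_k be real symmetric p×p matrices for k = −2n_1, −2n_1+1, …, 2n_2. Assume the block Hankel matrix (S_{i+j−2−2n_1})_{i,j=1}^{n_1+n_2+1}, of size (n_1+n_2+1)p, is positive definite. Then there exist ℓ ≥ 1, pairwise distinct nonzero real numbers x_1, …, x_ℓ and positive semidefinite real symmetric p×p matrices B_1, …, B_ℓ such that S_k = Σ_{j=1}^ℓ x_j^k B_j for every integer k with −2n_1 ≤ k ≤ 2n_2 (where x_j^k denotes the k-th integer power of the nonzero real x_j). -/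
open Matrix

/-- The block Hankel moment matrix of a two-sided sequence `S : ℤ → M_p(ℝ)` relative to
`n₁, n₂`: its `(i,j)`-th `p × p` block is `S (i + j - 2n₁)` for `0 ≤ i, j ≤ n₁ + n₂`. -/
def strongMomentMatrix (p n₁ n₂ : ℕ) (S : ℤ → Matrix (Fin p) (Fin p) ℝ) :
    Matrix (Fin (n₁ + n₂ + 1) × Fin p) (Fin (n₁ + n₂ + 1) × Fin p) ℝ :=
  fun i j => S ((i.1.1 : ℤ) + (j.1.1 : ℤ) - 2 * (n₁ : ℤ)) i.2 j.2

/-!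
Border the positive definite matrix `(S_{i+j-2n₁})` by two new leading moments, `U₁ = 0` and a
suitable `U₀`, to a positive definite block Hankel matrix `A = (U_{i+j})` of an ordinary Hamburger
problem with `U_{k+2} = S_{k-2n₁}`. Simultaneously diagonalising `A = VᴴV` and its shift
`B = (U_{i+j+1}) = Vᴴ D V` gives Gaussian quadrature: `T = V⁻¹ D V` satisfies `A T = B`, so `Tᵏ`
carries the first block column `E₀` of the identity to the `k`-th one, and
`U_{a+b} = E₀ᴴ (Tᵃ)ᴴ A Tᵇ E₀ = (V E₀)ᴴ D^{a+b} (V E₀) = ∑ⱼ dⱼ^{a+b} cⱼ cⱼᴴ`.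
As `S_k = U_{k+2n₁+2}` with an exponent `≥ 2`, the nodes `dⱼ = 0` drop out, and the weights of
`S_k = ∑ⱼ dⱼᵏ (dⱼ^{2n₁+2} cⱼ cⱼᴴ)` are positive semidefinite.
-/

open Finset
open scoped ComplexOrder

lemma Fin.exists_val_add_val_eq {N k : ℕ} (hk : k ≤ 2 * N) :
    ∃ a b : Fin (N + 1), (a : ℕ) + b = k :=
  ⟨⟨min k N, by omega⟩, ⟨k - min k N, by omega⟩, by simp only; omega⟩

namespace Matrix

section BlockHankel

variable {m α : Type*}

def blockHankel (U : ℕ → Matrix m m α) (N : ℕ) : Matrix (Fin (N + 1) × m) (Fin (N + 1) × m) α :=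
  of fun i j => U (i.1.val + j.1.val) i.2 j.2

@[simp]
lemma blockHankel_apply (U : ℕ → Matrix m m α) (N : ℕ) (i j : Fin (N + 1) × m) :
    blockHankel U N i j = U (i.1.val + j.1.val) i.2 j.2 := rfl

lemma isHermitian_blockHankel [Star α] {U : ℕ → Matrix m m α} {N : ℕ}
    (hU : ∀ k, (U k).IsHermitian) : (blockHankel U N).IsHermitian :=
  IsHermitian.ext fun i j => by
    rw [blockHankel_apply, blockHankel_apply, add_comm, (hU _).apply]

lemma IsHermitian.of_blockHankel [Star α] {U : ℕ → Matrix m m α} {N : ℕ}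
    (h : (blockHankel U N).IsHermitian) {k : ℕ} (hk : k ≤ 2 * N) : (U k).IsHermitian := by
  obtain ⟨a, b, rfl⟩ := Fin.exists_val_add_val_eq hk
  refine IsHermitian.ext fun x y => ?_
  simpa [add_comm] using h.apply (b, x) (a, y)

variable [Fintype m] [DecidableEq m] [CommRing α] {U : ℕ → Matrix m m α} {N : ℕ}

lemma blockHankel_succ_mulVec_single (U : ℕ → Matrix m m α) (i : Fin N) (c : m) :
    blockHankel (fun k => U (k + 1)) N *ᵥ Pi.single (i.castSucc, c) 1 =
      blockHankel U N *ᵥ Pi.single (i.succ, c) 1 := by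
  ext v
  simp [add_assoc]

/-- In the basis `Pi.single (i, c) 1 ↔ xⁱ e_c`, `T = A⁻¹ B` is multiplication by `x`. -/
lemma pow_mulVec_single_zero_of_blockHankel_mul (hA : IsUnit (blockHankel U N))
    {T : Matrix (Fin (N + 1) × m) (Fin (N + 1) × m) α}
    (hT : blockHankel U N * T = blockHankel (fun k => U (k + 1)) N) (i : Fin (N + 1)) (c : m) :
    T ^ (i : ℕ) *ᵥ Pi.single (0, c) 1 = Pi.single (i, c) 1 := by
  induction i using Fin.induction with
  | zero => simp only [Fin.val_zero, pow_zero, one_mulVec]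
  | succ i ih =>
    apply mulVec_injective_of_isUnit hA
    rw [Fin.val_succ, pow_succ', ← mulVec_mulVec, ← Fin.val_castSucc, ih, mulVec_mulVec, hT,
      blockHankel_succ_mulVec_single]

lemma conjTranspose_mul_mul_apply {ι κ : Type*} [Fintype ι] [Fintype κ] [DecidableEq ι]
    [DecidableEq κ] [StarRing α] (P : Matrix ι ι α) (M : Matrix ι κ α) (Q : Matrix κ κ α)
    (i : ι) (j : κ) :
    (Pᴴ * M * Q) i j = star (P *ᵥ Pi.single i 1) ⬝ᵥ M *ᵥ (Q *ᵥ Pi.single j 1) := by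
  rw [star_mulVec, Pi.star_single, star_one, mulVec_mulVec, dotProduct_mulVec, vecMul_vecMul,
    ← Matrix.mul_assoc, single_one_vecMul, dotProduct_single_one]
  rfl

lemma eq_submatrix_conjTranspose_pow_mul_blockHankel_mul_pow [StarRing α]
    (hA : IsUnit (blockHankel U N)) {T : Matrix (Fin (N + 1) × m) (Fin (N + 1) × m) α}
    (hT : blockHankel U N * T = blockHankel (fun k => U (k + 1)) N) (a b : Fin (N + 1)) :
    U (a + b) =
      ((T ^ (a : ℕ))ᴴ * blockHankel U N * T ^ (b : ℕ)).submatrix (Prod.mk 0) (Prod.mk 0) := by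
  ext x y
  rw [submatrix_apply, conjTranspose_mul_mul_apply, pow_mulVec_single_zero_of_blockHankel_mul hA hT,
    pow_mulVec_single_zero_of_blockHankel_mul hA hT, Pi.star_single, star_one,
    single_one_dotProduct, mulVec_single_one]
  rfl

end BlockHankel

section RCLike

variable {𝕜 m : Type*} [RCLike 𝕜] [Fintype m] [DecidableEq m]

open scoped MatrixOrder in
theorem PosDef.exists_simultaneous_diagonalization {A B : Matrix m m 𝕜} (hA : A.PosDef)
    (hB : B.IsHermitian) :
    ∃ (V : Matrix m m 𝕜) (d : m → ℝ), IsUnit V ∧ A = Vᴴ * V ∧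
      B = Vᴴ * diagonal (fun j => (d j : 𝕜)) * V := by
  obtain ⟨R, hR⟩ := CStarAlgebra.nonneg_iff_eq_star_mul_self.mp hA.posSemidef.nonneg
  rw [star_eq_conjTranspose] at hR
  have hRdet : IsUnit R.det := by
    have := (isUnit_iff_isUnit_det A).mp hA.isUnit
    rw [hR, det_mul] at this
    exact isUnit_of_mul_isUnit_right this
  have hC : (R⁻¹ᴴ * B * R⁻¹).IsHermitian := isHermitian_conjTranspose_mul_mul R⁻¹ hB
  obtain ⟨Q, d, hQ, hspec⟩ : ∃ (Q : Matrix m m 𝕜) (d : m → ℝ),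
      Q * Qᴴ = 1 ∧ R⁻¹ᴴ * B * R⁻¹ = Q * diagonal (fun j => (d j : 𝕜)) * Qᴴ :=
    ⟨_, _, Unitary.mul_star_self_of_mem hC.eigenvectorUnitary.2, hC.spectral_theorem⟩
  refine ⟨Qᴴ * R, d, (IsUnit.of_mul_eq_one_right Q hQ).mul ((isUnit_iff_isUnit_det R).mpr hRdet),
    ?_, ?_⟩
  · rw [conjTranspose_mul, conjTranspose_conjTranspose, mul_assoc, ← mul_assoc Q, hQ, one_mul, hR]
  · calc B = (R⁻¹ * R)ᴴ * B * (R⁻¹ * R) := by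
          rw [nonsing_inv_mul R hRdet, conjTranspose_one, one_mul, mul_one]
      _ = Rᴴ * (R⁻¹ᴴ * B * R⁻¹) * R := by rw [conjTranspose_mul]; noncomm_ring
      _ = _ := by rw [hspec, conjTranspose_mul, conjTranspose_conjTranspose]; noncomm_ring

theorem posDef_fromBlocks_of_posDef_schur {n : Type*} [Fintype n] [DecidableEq n]
    {A : Matrix m m 𝕜} {B : Matrix m n 𝕜} {D : Matrix n n 𝕜} (hD : D.PosDef)
    (hS : (A - B * D⁻¹ * Bᴴ).PosDef) : (fromBlocks A B Bᴴ D).PosDef := by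
  have := hD.isUnit.invertible
  refine ((PosDef.fromBlocks₂₂ A B hD).mpr hS.posSemidef).posDef_iff_isUnit.mpr ?_
  rw [isUnit_fromBlocks_iff_of_invertible₂₂, invOf_eq_nonsing_inv]
  exact hS.isUnit

omit [Fintype m] [DecidableEq m] in
lemma conjTranspose_mul_diagonal_ofReal_mul {ι : Type*} [Fintype ι] [DecidableEq ι]
    (W : Matrix ι m 𝕜) (w : ι → ℝ) :
    Wᴴ * diagonal (fun j => (w j : 𝕜)) * W = ∑ j, w j • vecMulVec (star (W j)) (W j) := by
  ext a b
  simp only [mul_apply, vecMulVec_apply, Matrix.sum_apply, diagonal_apply, conjTranspose_apply,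
    Matrix.smul_apply, RCLike.real_smul_eq_coe_mul, Pi.star_apply, mul_ite, mul_zero,
    sum_ite_eq', mem_univ, if_true]
  exact sum_congr rfl fun j _ => by ring

variable {U : ℕ → Matrix m m 𝕜} {N : ℕ}

/-- Gaussian quadrature: the nodes are the eigenvalues of the pencil `B - λ A` formed by the block
Hankel matrix `A` and its shift `B`. -/
theorem exists_eq_sum_pow_smul_vecMulVec_of_isHermitian_shift (hA : (blockHankel U N).PosDef)
    (hB : (blockHankel (fun k => U (k + 1)) N).IsHermitian) :
    ∃ (d : Fin (N + 1) × m → ℝ) (c : Fin (N + 1) × m → m → 𝕜),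
      ∀ k ≤ 2 * N, U k = ∑ j, d j ^ k • vecMulVec (star (c j)) (c j) := by
  obtain ⟨V, d, hV, hAV, hBV⟩ := hA.exists_simultaneous_diagonalization hB
  set D : Matrix (Fin (N + 1) × m) (Fin (N + 1) × m) 𝕜 := diagonal (fun j => (d j : 𝕜))
  have hD : Dᴴ = D := by simp [D, diagonal_conjTranspose]
  set T := V⁻¹ * D * V
  have hVT : SemiconjBy V T D := by
    rw [SemiconjBy, ← mul_assoc, ← mul_assoc, mul_nonsing_inv V ((isUnit_iff_isUnit_det V).mp hV),
      one_mul]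
  have hAT : blockHankel U N * T = blockHankel (fun k => U (k + 1)) N := by
    rw [hAV, hBV, mul_assoc, hVT.eq, mul_assoc]
  have hTAT (a b : ℕ) : (T ^ a)ᴴ * blockHankel U N * T ^ b = Vᴴ * D ^ (a + b) * V := by
    rw [hAV, ← mul_assoc, ← conjTranspose_mul, mul_assoc, (hVT.pow_right a).eq,
      (hVT.pow_right b).eq, conjTranspose_mul, conjTranspose_pow, hD, pow_add]
    noncomm_ring
  refine ⟨d, V.submatrix id (Prod.mk 0), fun k hk => ?_⟩
  obtain ⟨a, b, rfl⟩ := Fin.exists_val_add_val_eq hk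
  rw [eq_submatrix_conjTranspose_pow_mul_blockHankel_mul_pow hA.isUnit hAT, hTAT,
    ← conjTranspose_mul_diagonal_ofReal_mul]
  simp only [D, diagonal_pow, RCLike.ofReal_pow]
  rfl

theorem PosDef.exists_eq_sum_pow_smul_vecMulVec (hA : (blockHankel U N).PosDef) :
    ∃ (d : Fin (N + 1) × m → ℝ) (c : Fin (N + 1) × m → m → 𝕜),
      ∀ k ≤ 2 * N, U k = ∑ j, d j ^ k • vecMulVec (star (c j)) (c j) := by
  -- The shift involves the unconstrained moment `U (2N + 1)`; replace it by `0`.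
  set U' : ℕ → Matrix m m 𝕜 := fun k => if k ≤ 2 * N then U k else 0
  have hUU' : blockHankel U' N = blockHankel U N := by
    ext i j
    simp only [blockHankel_apply, U', if_pos (by omega : i.1.val + j.1.val ≤ 2 * N)]
  have hU' (k : ℕ) : (U' k).IsHermitian := by
    by_cases hk : k ≤ 2 * N
    · simpa [U', hk] using hA.1.of_blockHankel hk
    · simp [U', hk]
  obtain ⟨d, c, h⟩ := exists_eq_sum_pow_smul_vecMulVec_of_isHermitian_shift (hUU' ▸ hA)
    (isHermitian_blockHankel fun k => hU' (k + 1))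
  exact ⟨d, c, fun k hk => by simpa [U', hk] using h k hk⟩

theorem exists_posDef_blockHankel_succ {V : ℕ → Matrix m m 𝕜} (hV : (blockHankel V N).PosDef) :
    ∃ U : ℕ → Matrix m m 𝕜, (∀ k, U (k + 2) = V k) ∧ (blockHankel U (N + 1)).PosDef := by
  set W : ℕ → Matrix m m 𝕜 := fun k => Nat.casesOn k 0 V
  set Y : Matrix m (Fin (N + 1) × m) 𝕜 := of fun a j => W j.1 a j.2
  -- `U 0` is chosen so that the Schur complement of the new corner block is the identity.
  set U : ℕ → Matrix m m 𝕜 := fun k => Nat.casesOn k (1 + Y * (blockHankel V N)⁻¹ * Yᴴ) W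
  refine ⟨U, fun k => rfl, ?_⟩
  have hW (i : Fin (N + 1)) : (W i).IsHermitian := by
    rcases i with ⟨_ | k, hk⟩
    · exact isHermitian_zero
    · exact hV.1.of_blockHankel (by omega)
  let e : Fin (N + 2) × m ≃ m ⊕ (Fin (N + 1) × m) :=
    ((finSuccEquiv (N + 1)).prodCongr (Equiv.refl m)).trans optionProdEquiv
  have hblocks : blockHankel U (N + 1) =
      (fromBlocks (U 0) Y Yᴴ (blockHankel V N)).submatrix e e := by
    ext ⟨i, a⟩ ⟨j, b⟩
    induction i using Fin.cases <;> induction j using Fin.cases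
    · simp [e, U]
    · simp [e, U, Y]
    · simpa [e, U, Y] using ((hW _).apply a b).symm
    · simp [e, U, W, add_add_add_comm]
  rw [hblocks]
  refine (posDef_fromBlocks_of_posDef_schur hV ?_).submatrix e.injective
  simpa [U] using PosDef.one

omit [Fintype m] [DecidableEq m] in
theorem exists_injective_ne_zero_atoms {ι : Type*} [Fintype ι] (d : ι → ℝ)
    (P : ι → Matrix m m 𝕜) (hP : ∀ j, (P j).PosSemidef) :
    ∃ (ℓ : ℕ) (x : Fin ℓ → ℝ) (B : Fin ℓ → Matrix m m 𝕜), Function.Injective x ∧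
      (∀ j, x j ≠ 0) ∧ (∀ j, (B j).PosSemidef) ∧
      ∀ k ≠ 0, ∑ j, d j ^ k • P j = ∑ j, x j ^ k • B j := by
  classical
  set s := (univ.image d).erase 0
  set B : ℝ → Matrix m m 𝕜 := fun v => ∑ j with d j = v, P j
  refine ⟨s.card, fun i => s.equivFin.symm i, fun i => B (s.equivFin.symm i),
    Subtype.val_injective.comp s.equivFin.symm.injective,
    fun i => ne_of_mem_erase (s.equivFin.symm i).2,
    fun i => posSemidef_sum _ fun j _ => hP j, fun k hk => ?_⟩
  calc ∑ j, d j ^ k • P j = ∑ v ∈ univ.image d, v ^ k • B v := by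
        refine (sum_image' _ fun j _ => ?_).symm
        rw [smul_sum]
        exact sum_congr rfl fun i hi => by rw [(mem_filter.mp hi).2]
    _ = ∑ v ∈ s, v ^ k • B v := (sum_erase _ (by simp [hk])).symm
    _ = ∑ i, (s.equivFin.symm i : ℝ) ^ k • B (s.equivFin.symm i) :=
        (sum_coe_sort s _).symm.trans (s.equivFin.symm.sum_comp fun v => (v : ℝ) ^ k • B v).symm

end RCLike

end Matrix

lemma strongMomentMatrix_eq_blockHankel (p n₁ n₂ : ℕ) (S : ℤ → Matrix (Fin p) (Fin p) ℝ) :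
    strongMomentMatrix p n₁ n₂ S = blockHankel (fun k : ℕ => S (k - 2 * n₁)) (n₁ + n₂) := by
  ext i j
  simp [strongMomentMatrix]

theorem strong_truncated_matrix_hamburger_nonsingular_general (p n₁ n₂ : ℕ)
    (hp : 1 ≤ p)
    (S : ℤ → Matrix (Fin p) (Fin p) ℝ)
    (hM : (strongMomentMatrix p n₁ n₂ S).PosDef) :
    ∃ (ℓ : ℕ) (x : Fin ℓ → ℝ) (B : Fin ℓ → Matrix (Fin p) (Fin p) ℝ),
      1 ≤ ℓ ∧
      Function.Injective x ∧
      (∀ j, x j ≠ 0) ∧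
      (∀ j, (B j).PosSemidef) ∧
      (∀ k : ℤ, -(2 * (n₁ : ℤ)) ≤ k → k ≤ 2 * (n₂ : ℤ) →
        S k = ∑ j, x j ^ k • B j) := by
  rw [strongMomentMatrix_eq_blockHankel] at hM
  obtain ⟨U, hUS, hU⟩ := exists_posDef_blockHankel_succ hM
  obtain ⟨d, c, hdc⟩ := hU.exists_eq_sum_pow_smul_vecMulVec
  obtain ⟨ℓ, x, B, hx, hx0, hB, hxB⟩ :=
    exists_injective_ne_zero_atoms d _ fun j => posSemidef_vecMulVec_star_self (c j)
  have hS (e : ℕ) (he : e ≤ 2 * (n₁ + n₂)) : S (e - 2 * n₁) = ∑ j, x j ^ (e + 2) • B j := by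
    rw [← hxB _ (by omega), ← hdc _ (by omega), hUS]
  refine ⟨ℓ, x, fun j => x j ^ (2 * n₁ + 2) • B j, ?_, hx, hx0,
    fun j => (hB j).smul (Even.pow_nonneg ⟨n₁ + 1, by ring⟩ _), fun k hk₁ hk₂ => ?_⟩
  · by_contra! hℓ
    obtain rfl : ℓ = 0 := by omega
    have h0 := hS 0 (by omega)
    simp only [Nat.cast_zero, zero_sub, univ_eq_empty, sum_empty] at h0
    simpa [h0] using hM.diag_pos (i := (0, ⟨0, hp⟩))
  · obtain ⟨e, rfl⟩ : ∃ e : ℕ, (e : ℤ) - 2 * n₁ = k := ⟨(k + 2 * n₁).toNat, by omega⟩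
    rw [hS e (by omega)]
    refine sum_congr rfl fun j _ => ?_
    rw [smul_smul, ← zpow_natCast, ← zpow_natCast, ← zpow_add₀ (hx0 j)]
    congr 2
    push_cast
    ring

/-- Corollary 1.3: solution of the strong truncated matrix Hamburger moment problem in the
nonsingular case. If the moment matrix `(S_{i+j-2-2n₁})_{i,j=1}^{n₁+n₂+1}` is positive
definite, then there is a finitely atomic representing measure with nonzero real atoms. -/
theorem strong_truncated_matrix_hamburger_nonsingular (p n₁ n₂ : ℕ)
    (hp : 1 ≤ p) (hn₁ : 1 ≤ n₁) (hn₂ : 1 ≤ n₂)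
    (S : ℤ → Matrix (Fin p) (Fin p) ℝ)
    (hSsym : ∀ k : ℤ, -(2 * (n₁ : ℤ)) ≤ k → k ≤ 2 * (n₂ : ℤ) → (S k).IsSymm)
    (hM : (strongMomentMatrix p n₁ n₂ S).PosDef) :
    ∃ (ℓ : ℕ) (x : Fin ℓ → ℝ) (B : Fin ℓ → Matrix (Fin p) (Fin p) ℝ),
      1 ≤ ℓ ∧
      Function.Injective x ∧
      (∀ j, x j ≠ 0) ∧
      (∀ j, (B j).PosSemidef) ∧
      (∀ k : ℤ, -(2 * (n₁ : ℤ)) ≤ k → k ≤ 2 * (n₂ : ℤ) →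
        S k = ∑ j, x j ^ k • B j) :=
  strong_truncated_matrix_hamburger_nonsingular_general p n₁ n₂ hp S hM
end

section
/- Let p, n ≥ 1, let S = (S_0, …, S_{2n}) be a truncated matrix moment sequence, and suppose x_1, …, x_ℓ ∈ ℝ are pairwise distinct and A_1, …, A_ℓ are nonzero positive semidefinite real symmetric p×p matrices with S_i = Σ_{j=1}^ℓ x_j^i A_j for all 0 ≤ i ≤ 2n. Let P_0, P_1, …, P_n be real p×p matrices giving a block column relation of the moment matrix M(n), i.e., Σ_{i=0}^n v_i P_i = 0, where v_i = (S_i; S_{i+1}; …; S_{i+n}) denotes the i-th block column of M(n). Then every atom x_j is a zero of the determinant of the matrix polynomial P(x) = Σ_{i=0}^n x^i P_i, i.e., det P(x_j) = 0 for every j = 1, …, ℓ. -/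
/-!
With `Q_k = P(x_k)`, the representation `S_i = ∑_k x_k^i A_k` turns the block column relation
into `∑_k Q_kᵀ A_k Q_k = ∑_r P_rᵀ ∑_i S_{r+i} P_i = 0`. Every summand is positive semidefinite,
so every summand vanishes, and for positive semidefinite `A_j` this forces `A_j Q_j = 0`.
Since `A_j ≠ 0`, the matrix `Q_j` cannot be invertible.
-/

open Matrix

namespace Matrix

section PosSemidef

open scoped ComplexOrder MatrixOrder

variable {n 𝕜 : Type*} [RCLike 𝕜]

theorem PosSemidef.eq_zero_of_sum_eq_zero {ι : Type*} {s : Finset ι} {A : ι → Matrix n n 𝕜}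
    (hA : ∀ i ∈ s, (A i).PosSemidef) (hsum : ∑ i ∈ s, A i = 0) : ∀ i ∈ s, A i = 0 :=
  (Finset.sum_eq_zero_iff_of_nonneg fun i hi ↦ (hA i hi).nonneg).mp hsum

theorem PosSemidef.conjTranspose_mul_mul_same_eq_zero_iff [Fintype n] {m : Type*} [Fintype m]
    {A : Matrix n n 𝕜} (hA : A.PosSemidef) (B : Matrix n m 𝕜) :
    Bᴴ * A * B = 0 ↔ A * B = 0 := by
  classical
  obtain ⟨R, rfl⟩ := CStarAlgebra.nonneg_iff_eq_star_mul_self.mp hA.nonneg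
  have hsquare : Bᴴ * (Rᴴ * R) * B = (R * B)ᴴ * (R * B) := by
    simp only [conjTranspose_mul, Matrix.mul_assoc]
  rw [star_eq_conjTranspose, conjTranspose_mul_self_mul_eq_zero, hsquare,
    conjTranspose_mul_self_eq_zero]

end PosSemidef

theorem det_eq_zero_of_mul_eq_zero {n K : Type*} [Fintype n] [DecidableEq n] [Field K]
    {A B : Matrix n n K} (hA : A ≠ 0) (h : A * B = 0) : B.det = 0 := by
  by_contra hB
  exact hA (((isUnit_iff_isUnit_det B).mpr (Ne.isUnit hB)).mul_left_eq_zero.mp h)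

theorem sum_transpose_mul_mul_eq_sum_transpose_mul_moment_mul {R m ι : Type*} [CommSemiring R]
    [Fintype m] [Fintype ι] (s : Finset ℕ) (x : ι → R) (A : ι → Matrix m m R)
    (P : ℕ → Matrix m m R) :
    ∑ k, (∑ i ∈ s, x k ^ i • P i)ᵀ * A k * ∑ i ∈ s, x k ^ i • P i
      = ∑ r ∈ s, (P r)ᵀ * ∑ i ∈ s, (∑ k, x k ^ (r + i) • A k) * P i := by
  simp only [transpose_sum, transpose_smul, Finset.sum_mul, Finset.mul_sum, Matrix.smul_mul,
    Matrix.mul_smul, smul_smul, pow_add, Matrix.mul_assoc]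
  rw [Finset.sum_comm]
  refine (Finset.sum_congr rfl fun _ _ ↦ Finset.sum_comm).trans ?_
  rw [Finset.sum_comm]
  exact Finset.sum_congr rfl fun _ _ ↦ Finset.sum_congr rfl fun _ _ ↦
    Finset.sum_congr rfl fun _ _ ↦ by rw [mul_comm]

end Matrix

theorem atoms_are_zeros_of_block_column_relation_general (p n ℓ : ℕ)
    (S : ℕ → Matrix (Fin p) (Fin p) ℝ)
    (x : Fin ℓ → ℝ)
    (A : Fin ℓ → Matrix (Fin p) (Fin p) ℝ)
    (hA : ∀ j, A j ≠ 0 ∧ (A j).PosSemidef)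
    (hrep : ∀ i ≤ 2 * n, S i = ∑ j, x j ^ i • A j)
    (P : ℕ → Matrix (Fin p) (Fin p) ℝ)
    (hrel : ∀ r : Fin (n + 1), ∑ i ∈ Finset.range (n + 1), S (r.1 + i) * P i = 0) :
    ∀ j, (∑ i ∈ Finset.range (n + 1), x j ^ i • P i).det = 0 := by
  intro j
  set Q : Fin ℓ → Matrix (Fin p) (Fin p) ℝ := fun k ↦ ∑ i ∈ Finset.range (n + 1), x k ^ i • P i
  have hsum : ∑ k, (Q k)ᴴ * A k * Q k = 0 := by
    simp only [conjTranspose_eq_transpose_of_trivial, Q,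
      sum_transpose_mul_mul_eq_sum_transpose_mul_moment_mul]
    refine Finset.sum_eq_zero fun r hr ↦ ?_
    have hr : r < n + 1 := Finset.mem_range.mp hr
    have hmoments : ∑ i ∈ Finset.range (n + 1), (∑ k, x k ^ (r + i) • A k) * P i
        = ∑ i ∈ Finset.range (n + 1), S (r + i) * P i :=
      Finset.sum_congr rfl fun i hi ↦ by
        rw [hrep _ (by have := Finset.mem_range.mp hi; omega)]
    rw [hmoments, hrel ⟨r, hr⟩, Matrix.mul_zero]
  have hAQ : A j * Q j = 0 := ((hA j).2.conjTranspose_mul_mul_same_eq_zero_iff (Q j)).mp <|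
    PosSemidef.eq_zero_of_sum_eq_zero (fun k _ ↦ (hA k).2.conjTranspose_mul_mul_same (Q k)) hsum
      j (Finset.mem_univ j)
  exact det_eq_zero_of_mul_eq_zero (hA j).1 hAQ

/-- Lemma 2.2: if a matrix polynomial `P(x) = ∑_{i=0}^n x^i P_i` is a block column relation
of the moment matrix `M(n)`, i.e. `∑_{i=0}^n v_i P_i = 0` where `v_i = (S_i; …; S_{i+n})`
is the `i`-th block column of `M(n)`, then every atom of a representing measure of the
sequence `S_0, …, S_{2n}` is a zero of `det P(x)`. -/
theorem atoms_are_zeros_of_block_column_relation (p n ℓ : ℕ) (hp : 1 ≤ p) (hn : 1 ≤ n)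
    (S : ℕ → Matrix (Fin p) (Fin p) ℝ)
    (hSsym : ∀ i ≤ 2 * n, (S i).IsSymm)
    (x : Fin ℓ → ℝ) (hinj : Function.Injective x)
    (A : Fin ℓ → Matrix (Fin p) (Fin p) ℝ)
    (hA : ∀ j, A j ≠ 0 ∧ (A j).PosSemidef)
    (hrep : ∀ i ≤ 2 * n, S i = ∑ j, x j ^ i • A j)
    (P : ℕ → Matrix (Fin p) (Fin p) ℝ)
    (hrel : ∀ r : Fin (n + 1), ∑ i ∈ Finset.range (n + 1), S (r.1 + i) * P i = 0) :
    ∀ j, (∑ i ∈ Finset.range (n + 1), x j ^ i • P i).det = 0 :=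
  atoms_are_zeros_of_block_column_relation_general p n ℓ S x A hA hrep P hrel
end
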